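/- arXiv:2510.05554 — 7 statements merged into one kernel-verified Lean document; each statement's English description precedes it below -/
import Mathlib

section
/- Fix $\rho \in (0,1)$, $\gamma > 0$ with $\gamma < \frac{1}{1-\rho}$, and for each $n \ge 2$ let $y_1^{(n)},\dots,y_n^{(n)}$ be unit vectors in some Euclidean space with pairwise inner product $\rho$. Let $\beta_n = \gamma\log n$, $Z_n = e^{\beta_n} + (n-1)e^{\rho\beta_n}$, and $x_i' = Z_n^{-1}(e^{\beta_n} y_i + e^{\rho\beta_n}\sum_{m\ne i} y_m)$. Then for any $i \ne j$, $\langle x_i'/\|x_i'\|, x_j'/\|x_j'\|\rangle \to 1$ as $n \to \infty$. -/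
open scoped RealInnerProductSpace BigOperators
open Filter

section aux
variable {E : Type*} [NormedAddCommGroup E] [InnerProductSpace ℝ E]

lemma auxA (n : ℕ) (y : Fin (n+2) → E) (ρ : ℝ)
    (hunit : ∀ i, ‖y i‖ = 1) (hinner : ∀ i j, i ≠ j → ⟪y i, y j⟫ = ρ)
    (k : Fin (n+2)) : ⟪y k, ∑ m, y m⟫ = 1 + ((n:ℝ)+1)*ρ := by
  rw [inner_sum, ← Finset.add_sum_erase _ _ (Finset.mem_univ k)]
  have h1 : ⟪y k, y k⟫ = 1 := by
    rw [real_inner_self_eq_norm_sq, hunit k]; norm_num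
  have h2 : ∑ m ∈ Finset.univ.erase k, ⟪y k, y m⟫ = ((n:ℝ)+1)*ρ := by
    rw [Finset.sum_congr rfl (fun m hm => hinner k m (Finset.ne_of_mem_erase hm).symm)]
    rw [Finset.sum_const, Finset.card_erase_of_mem (Finset.mem_univ k), Finset.card_univ,
      Fintype.card_fin, nsmul_eq_mul]
    push_cast; ring
  rw [h1, h2]

lemma auxB (n : ℕ) (y : Fin (n+2) → E) (ρ : ℝ)
    (hunit : ∀ i, ‖y i‖ = 1) (hinner : ∀ i j, i ≠ j → ⟪y i, y j⟫ = ρ) :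
    ⟪∑ m, y m, ∑ m, y m⟫ = ((n:ℝ)+2) * (1 + ((n:ℝ)+1)*ρ) := by
  rw [sum_inner, Finset.sum_congr rfl (fun k _ => auxA n y ρ hunit hinner k),
    Finset.sum_const, Finset.card_univ, Fintype.card_fin, nsmul_eq_mul]
  push_cast; ring

lemma auxC (n : ℕ) (y : Fin (n+2) → E) (ρ : ℝ)
    (hunit : ∀ i, ‖y i‖ = 1) (hinner : ∀ i j, i ≠ j → ⟪y i, y j⟫ = ρ)
    (c b : ℝ) (k l : Fin (n+2)) :
    ⟪c • y k + b • ∑ m, y m, c • y l + b • ∑ m, y m⟫ =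
      c^2 * ⟪y k, y l⟫ + 2*c*b*(1 + ((n:ℝ)+1)*ρ) + b^2*((n:ℝ)+2)*(1 + ((n:ℝ)+1)*ρ) := by
  have hS : ⟪∑ m, y m, y l⟫ = 1 + ((n:ℝ)+1)*ρ := by
    rw [real_inner_comm]; exact auxA n y ρ hunit hinner l
  simp only [inner_add_left, inner_add_right, real_inner_smul_left, real_inner_smul_right]
  rw [auxA n y ρ hunit hinner k, auxB n y ρ hunit hinner, hS]
  ring

lemma ratio_eq (n : ℕ) (y : Fin (n+2) → E) (ρ : ℝ)
    (hunit : ∀ i, ‖y i‖ = 1) (hinner : ∀ i j, i ≠ j → ⟪y i, y j⟫ = ρ)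
    (k l : Fin (n+2)) (hkl : k ≠ l) (a b Z : ℝ) (hba : b < a) (hb0 : 0 < b)
    (hσ : 0 < 1 + ((n:ℝ)+1)*ρ) (hZ : Z ≠ 0) :
    ⟪Z⁻¹ • (a • y k + b • ∑ m ∈ Finset.univ.erase k, y m),
      Z⁻¹ • (a • y l + b • ∑ m ∈ Finset.univ.erase l, y m)⟫ /
    (‖Z⁻¹ • (a • y k + b • ∑ m ∈ Finset.univ.erase k, y m)‖ *
      ‖Z⁻¹ • (a • y l + b • ∑ m ∈ Finset.univ.erase l, y m)‖)
    = (ρ * ((a-b)^2 / (2*(a-b)*b*(1+((n:ℝ)+1)*ρ) + b^2*((n:ℝ)+2)*(1+((n:ℝ)+1)*ρ))) + 1) /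
      ((a-b)^2 / (2*(a-b)*b*(1+((n:ℝ)+1)*ρ) + b^2*((n:ℝ)+2)*(1+((n:ℝ)+1)*ρ)) + 1) := by
  have hw : ∀ k : Fin (n+2), a • y k + b • ∑ m ∈ Finset.univ.erase k, y m
      = (a-b) • y k + b • ∑ m, y m := by
    intro k
    rw [Finset.sum_erase_eq_sub (Finset.mem_univ k), smul_sub, sub_smul]
    abel
  rw [hw k, hw l]
  set σv : ℝ := 1 + ((n:ℝ)+1)*ρ with hσv
  set Cv : ℝ := 2*(a-b)*b*σv + b^2*((n:ℝ)+2)*σv with hCv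
  have hab : 0 < a - b := by linarith
  have hn2 : (0:ℝ) < (n:ℝ)+2 := by positivity
  have hCpos : 0 < Cv := by
    have h1 : 0 < b^2*((n:ℝ)+2)*σv := by positivity
    have h2 : 0 < 2*(a-b)*b*σv := by positivity
    rw [hCv]; linarith
  set u : Fin (n+2) → E := fun k => (a-b) • y k + b • ∑ m, y m with hu
  have hukl : ⟪u k, u l⟫ = (a-b)^2 * ρ + Cv := by
    rw [hu]
    simp only []
    rw [auxC n y ρ hunit hinner (a-b) b k l, hinner k l hkl]
    rw [hCv, hσv]; ring
  have huself : ∀ k, ⟪u k, u k⟫ = (a-b)^2 + Cv := by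
    intro k
    rw [hu]
    simp only []
    rw [auxC n y ρ hunit hinner (a-b) b k k, real_inner_self_eq_norm_sq, hunit k]
    rw [hCv, hσv]; ring
  have hXin : ∀ k l : Fin (n+2), ⟪Z⁻¹ • u k, Z⁻¹ • u l⟫ = Z⁻¹ * (Z⁻¹ * ⟪u k, u l⟫) := by
    intro k l
    rw [real_inner_smul_left, real_inner_smul_right]
  have hnorm : ‖Z⁻¹ • u k‖ * ‖Z⁻¹ • u l‖ = Z⁻¹ * (Z⁻¹ * ((a-b)^2 + Cv)) := by
    have h1 : ‖Z⁻¹ • u k‖ * ‖Z⁻¹ • u k‖ = ‖Z⁻¹ • u l‖ * ‖Z⁻¹ • u l‖ := by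
      rw [← real_inner_self_eq_norm_mul_norm, ← real_inner_self_eq_norm_mul_norm,
        hXin k k, hXin l l, huself k, huself l]
    have h2 : ‖Z⁻¹ • u k‖ = ‖Z⁻¹ • u l‖ :=
      (mul_self_inj (norm_nonneg _) (norm_nonneg _)).mp h1
    rw [h2, ← real_inner_self_eq_norm_mul_norm, hXin l l, huself l]
  rw [hXin k l, hukl, hnorm]
  have hD : (0:ℝ) < (a-b)^2 + Cv := by nlinarith [sq_nonneg (a-b)]
  have hZi : Z⁻¹ ≠ 0 := inv_ne_zero hZ
  rw [div_eq_div_iff (by positivity) (by positivity)]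
  field_simp
end aux

theorem stmt5 (ρ γ : ℝ) (hρ : ρ ∈ Set.Ioo (0:ℝ) 1) (hγ0 : 0 < γ)
    (hγ : γ < 1 / (1 - ρ))
    (d : ℕ → ℕ) (y : (n : ℕ) → Fin (n + 2) → EuclideanSpace ℝ (Fin (d n)))
    (hunit : ∀ n i, ‖y n i‖ = 1)
    (hinner : ∀ n, ∀ i j : Fin (n + 2), i ≠ j → ⟪y n i, y n j⟫ = ρ)
    (i j : (n : ℕ) → Fin (n + 2)) (hij : ∀ n, i n ≠ j n) :
    Filter.Tendsto (fun n : ℕ =>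
      let β : ℝ := γ * Real.log (n + 2)
      let Z : ℝ := Real.exp β + ((n : ℝ) + 1) * Real.exp (ρ * β)
      let x' : Fin (n + 2) → EuclideanSpace ℝ (Fin (d n)) := fun k =>
        Z⁻¹ • (Real.exp β • y n k +
          Real.exp (ρ * β) • ∑ m ∈ Finset.univ.erase k, y n m)
      ⟪x' (i n), x' (j n)⟫ / (‖x' (i n)‖ * ‖x' (j n)‖))
      Filter.atTop (nhds 1) := by
  obtain ⟨hρ0, hρ1⟩ := hρ
  have hβpos : ∀ n : ℕ, 0 < γ * Real.log ((n:ℝ) + 2) := by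
    intro n
    have : (1:ℝ) < (n:ℝ) + 2 := by
      have : (0:ℝ) ≤ (n:ℝ) := Nat.cast_nonneg n
      linarith
    exact mul_pos hγ0 (Real.log_pos this)
  set β : ℕ → ℝ := fun n => γ * Real.log ((n:ℝ) + 2) with hβ
  set c : ℕ → ℝ := fun n => Real.exp (β n) - Real.exp (ρ * β n) with hc
  set b : ℕ → ℝ := fun n => Real.exp (ρ * β n) with hb
  set Cf : ℕ → ℝ := fun n =>
    2*(c n)*(b n)*(1+((n:ℝ)+1)*ρ) + (b n)^2*((n:ℝ)+2)*(1+((n:ℝ)+1)*ρ) with hCf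
  have hcpos : ∀ n, 0 < c n := by
    intro n
    have hb' : 0 < β n := hβpos n
    have h1 : ρ * β n < β n := by nlinarith [hb']
    simpa [hc] using sub_pos.mpr (Real.exp_lt_exp.mpr h1)
  have hbpos : ∀ n, 0 < b n := fun n => Real.exp_pos _
  have hσpos : ∀ n : ℕ, (0:ℝ) < 1 + ((n:ℝ)+1)*ρ := by
    intro n
    have h0 : (0:ℝ) ≤ (n:ℝ) := Nat.cast_nonneg n
    nlinarith
  have hCpos : ∀ n, 0 < Cf n := by
    intro n
    have h1 := hcpos n; have h2 := hbpos n; have h3 := hσpos n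
    have h4 : (0:ℝ) < (n:ℝ) + 2 := by positivity
    have h5 : 0 < (b n)^2*((n:ℝ)+2)*(1+((n:ℝ)+1)*ρ) := by positivity
    have h6 : 0 < 2*(c n)*(b n)*(1+((n:ℝ)+1)*ρ) := by positivity
    simp only [hCf]; linarith
  set t : ℕ → ℝ := fun n => (c n)^2 / Cf n with ht
  have htnn : ∀ n, 0 ≤ t n := fun n => div_nonneg (sq_nonneg _) (hCpos n).le
  set s : ℝ := 2 * γ * (1 - ρ) with hs
  have h1ρ : 0 < 1 - ρ := by linarith
  have hs2 : s < 2 := by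
    rw [lt_div_iff₀ h1ρ] at hγ
    simp only [hs]; nlinarith
  have hbound : ∀ n, t n ≤ 2/ρ * ((n:ℝ)+2) ^ (s - 2) := by
    intro n
    have hn2 : (0:ℝ) < (n:ℝ) + 2 := by positivity
    have hnum : (c n)^2 ≤ (b n)^2 * ((n:ℝ)+2) ^ s := by
      have hle : c n ≤ Real.exp (β n) := by
        have := Real.exp_pos (ρ * β n); simp only [hc]; linarith
      have h1 : (c n)^2 ≤ Real.exp (β n) ^ 2 := by nlinarith [hcpos n]
      have h2 : Real.exp (β n) ^ 2 = (b n)^2 * ((n:ℝ)+2) ^ s := by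
        rw [hb, Real.rpow_def_of_pos hn2, ← Real.exp_nat_mul, ← Real.exp_nat_mul,
          ← Real.exp_add]
        congr 1
        simp only [hβ, hs]
        push_cast; ring
      linarith [h2 ▸ h1]
    have hden : (b n)^2 * ((n:ℝ)+2)^2 * ρ / 2 ≤ Cf n := by
      have h1 := hcpos n; have h2 := hbpos n; have h3 := hσpos n
      have h0 : (0:ℝ) ≤ (n:ℝ) := Nat.cast_nonneg n
      have h5 : 0 ≤ 2*(c n)*(b n)*(1+((n:ℝ)+1)*ρ) := by positivity
      have key : (b n)^2 * ((n:ℝ)+2)^2 * ρ / 2 ≤ (b n)^2*((n:ℝ)+2)*(1+((n:ℝ)+1)*ρ) := by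
        have hbn : (0:ℝ) < (b n)^2 * ((n:ℝ)+2) := by positivity
        have : ((n:ℝ)+2)*ρ/2 ≤ 1+((n:ℝ)+1)*ρ := by nlinarith
        nlinarith
      simp only [hCf]
      exact key.trans (le_add_of_nonneg_left h5)
    have hdpos : (0:ℝ) < (b n)^2 * ((n:ℝ)+2)^2 * ρ / 2 := by positivity
    calc t n ≤ ((b n)^2 * ((n:ℝ)+2) ^ s) / ((b n)^2 * ((n:ℝ)+2)^2 * ρ / 2) :=
          div_le_div₀ (by positivity) hnum hdpos hden
      _ = 2/ρ * ((n:ℝ)+2) ^ (s - 2) := by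
          have hpow : ((n:ℝ)+2) ^ s = ((n:ℝ)+2) ^ (s-2) * ((n:ℝ)+2)^2 := by
            rw [← Real.rpow_natCast ((n:ℝ)+2) 2, ← Real.rpow_add hn2]
            norm_num
          rw [hpow]
          have hb2 : (b n) ≠ 0 := (hbpos n).ne'
          have hρ' : ρ ≠ 0 := hρ0.ne'
          field_simp
  have hrb : Tendsto (fun n : ℕ => ((n:ℝ)+2) ^ (s-2)) atTop (nhds 0) := by
    have h1 : Tendsto (fun x : ℝ => x ^ (s-2)) atTop (nhds 0) := by
      have := tendsto_rpow_neg_atTop (y := 2 - s) (by linarith)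
      simpa [neg_sub] using this
    exact h1.comp (tendsto_atTop_add_const_right atTop 2 tendsto_natCast_atTop_atTop)
  have htzero : Tendsto t atTop (nhds 0) := by
    apply squeeze_zero htnn hbound
    simpa using hrb.const_mul (2/ρ)
  have hlim : Tendsto (fun n => (ρ * t n + 1)/(t n + 1)) atTop (nhds 1) := by
    have h1 : Tendsto (fun n => ρ * t n + 1) atTop (nhds 1) := by
      have := (htzero.const_mul ρ).add_const 1
      simpa using this
    have h2 : Tendsto (fun n => t n + 1) atTop (nhds 1) := by
      have := htzero.add_const 1
      simpa using this
    simpa [Pi.div_def] using h1.div h2 one_ne_zero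
  apply hlim.congr
  intro n
  simp only []
  have hZne : (Real.exp (β n) + ((n:ℝ)+1) * Real.exp (ρ * β n)) ≠ 0 := by
    have h1 := Real.exp_pos (β n); have h2 := Real.exp_pos (ρ * β n)
    have h0 : (0:ℝ) ≤ (n:ℝ) := Nat.cast_nonneg n
    nlinarith
  have hkey := ratio_eq n (y n) ρ (hunit n) (hinner n) (i n) (j n) (hij n)
    (Real.exp (β n)) (Real.exp (ρ * β n))
    (Real.exp (β n) + ((n:ℝ)+1) * Real.exp (ρ * β n))
    (by have := hcpos n; simp only [hc] at this; linarith) (Real.exp_pos _) (hσpos n) hZne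
  rw [hkey]
end

section
/- Fix $\rho \in (0,1)$, $\gamma > \frac{1}{1-\rho}$, and for each $n \ge 2$ let $y_1^{(n)},\dots,y_n^{(n)}$ be unit vectors with pairwise inner product $\rho$. Let $\beta_n = \gamma\log n$, $Z_n = e^{\beta_n} + (n-1)e^{\rho\beta_n}$, and $x_i' = Z_n^{-1}(e^{\beta_n} y_i + e^{\rho\beta_n}\sum_{m\ne i} y_m)$. Then for any $i \ne j$, $\langle x_i'/\|x_i'\|, x_j'/\|x_j'\|\rangle \to \rho$ as $n \to \infty$. -/
open scoped RealInnerProductSpace BigOperators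
open Filter

private lemma cos_formula {dd N : ℕ} (ρ a b Z : ℝ)
    (y : Fin (N + 2) → EuclideanSpace ℝ (Fin dd))
    (hunit : ∀ k, ‖y k‖ = 1)
    (hinner : ∀ k l : Fin (N + 2), k ≠ l → ⟪y k, y l⟫ = ρ)
    (hb : 0 < b) (hba : b < a) (hZdef : Z = a + ((N : ℝ) + 1) * b)
    (hc : 0 < 1 + ((N : ℝ) + 1) * ρ)
    (i j : Fin (N + 2)) (hij : i ≠ j) :
    ⟪(Z⁻¹ • (a • y i + b • ∑ m ∈ Finset.univ.erase i, y m) : EuclideanSpace ℝ (Fin dd)),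
      Z⁻¹ • (a • y j + b • ∑ m ∈ Finset.univ.erase j, y m)⟫ /
      (‖(Z⁻¹ • (a • y i + b • ∑ m ∈ Finset.univ.erase i, y m) : EuclideanSpace ℝ (Fin dd))‖ *
       ‖(Z⁻¹ • (a • y j + b • ∑ m ∈ Finset.univ.erase j, y m) : EuclideanSpace ℝ (Fin dd))‖) =
    (ρ + (2*(a-b)*b*(1+((N:ℝ)+1)*ρ) + b^2*((N:ℝ)+2)*(1+((N:ℝ)+1)*ρ))/(a-b)^2) /
    (1 + (2*(a-b)*b*(1+((N:ℝ)+1)*ρ) + b^2*((N:ℝ)+2)*(1+((N:ℝ)+1)*ρ))/(a-b)^2) := by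
  have hq : 0 < a - b := sub_pos.mpr hba
  have ha : 0 < a := hb.trans hba
  have hZpos : 0 < Z := by rw [hZdef]; positivity
  set c : ℝ := 1 + ((N:ℝ)+1)*ρ with hc_def
  set E : ℝ := 2*(a-b)*b*c + b^2*((N:ℝ)+2)*c with hE_def
  set S : EuclideanSpace ℝ (Fin dd) := ∑ m : Fin (N+2), y m with hS_def
  have hx : ∀ k : Fin (N+2),
      (Z⁻¹ • (a • y k + b • ∑ m ∈ Finset.univ.erase k, y m) : EuclideanSpace ℝ (Fin dd))
        = Z⁻¹ • ((a-b) • y k + b • S) := by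
    intro k
    rw [Finset.sum_erase_eq_sub (Finset.mem_univ k), hS_def]
    module
  have hyS : ∀ k, ⟪y k, S⟫ = c := by
    intro k
    rw [hS_def, inner_sum, ← Finset.add_sum_erase _ _ (Finset.mem_univ k),
      real_inner_self_eq_norm_sq, hunit k,
      Finset.sum_congr rfl (fun m hm => hinner k m (Ne.symm (Finset.ne_of_mem_erase hm))),
      Finset.sum_const, Finset.card_erase_of_mem (Finset.mem_univ k), Finset.card_univ,
      Fintype.card_fin]
    simp [hc_def, nsmul_eq_mul]
  have hSS : ⟪S, S⟫ = ((N:ℝ)+2) * c := by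
    nth_rewrite 1 [hS_def]
    rw [sum_inner, Finset.sum_congr rfl (fun k _ => hyS k), Finset.sum_const,
      Finset.card_univ, Fintype.card_fin]
    simp [nsmul_eq_mul]
  have key : ∀ k l : Fin (N+2),
      ⟪(Z⁻¹ • ((a-b) • y k + b • S) : EuclideanSpace ℝ (Fin dd)), Z⁻¹ • ((a-b) • y l + b • S)⟫
        = Z⁻¹^2 * ((a-b)^2 * ⟪y k, y l⟫ + E) := by
    intro k l
    simp only [real_inner_smul_left, real_inner_smul_right, inner_add_left, inner_add_right]
    rw [hyS k, hSS, real_inner_comm (y l) S, hyS l, hE_def]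
    ring
  have hipij : ⟪(Z⁻¹ • (a • y i + b • ∑ m ∈ Finset.univ.erase i, y m) : EuclideanSpace ℝ (Fin dd)),
      Z⁻¹ • (a • y j + b • ∑ m ∈ Finset.univ.erase j, y m)⟫ = Z⁻¹^2 * ((a-b)^2*ρ + E) := by
    rw [hx i, hx j, key i j, hinner i j hij]
  have hnorm : ∀ k, ‖(Z⁻¹ • (a • y k + b • ∑ m ∈ Finset.univ.erase k, y m) :
      EuclideanSpace ℝ (Fin dd))‖^2 = Z⁻¹^2 * ((a-b)^2 + E) := by
    intro k
    rw [← real_inner_self_eq_norm_sq, hx k, key k k, real_inner_self_eq_norm_sq, hunit k,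
      one_pow, mul_one]
  have hEpos : 0 < E := by
    rw [hE_def]
    have h1 : 0 < 2*(a-b)*b*c := mul_pos (mul_pos (mul_pos two_pos hq) hb) hc
    have h2 : 0 < b^2*((N:ℝ)+2)*c := mul_pos (mul_pos (pow_pos hb 2) (by positivity)) hc
    linarith
  have hD : 0 < (a-b)^2 + E := by positivity
  have hnn : ‖(Z⁻¹ • (a • y i + b • ∑ m ∈ Finset.univ.erase i, y m) :
      EuclideanSpace ℝ (Fin dd))‖ * ‖(Z⁻¹ • (a • y j + b • ∑ m ∈ Finset.univ.erase j, y m) :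
      EuclideanSpace ℝ (Fin dd))‖ = Z⁻¹^2 * ((a-b)^2 + E) := by
    have h1 := hnorm i
    have h2 := hnorm j
    have heq : ‖(Z⁻¹ • (a • y i + b • ∑ m ∈ Finset.univ.erase i, y m) :
        EuclideanSpace ℝ (Fin dd))‖ = ‖(Z⁻¹ • (a • y j + b • ∑ m ∈ Finset.univ.erase j, y m) :
        EuclideanSpace ℝ (Fin dd))‖ := by
      have e1 : ‖(Z⁻¹ • (a • y i + b • ∑ m ∈ Finset.univ.erase i, y m) :
          EuclideanSpace ℝ (Fin dd))‖ = Real.sqrt (Z⁻¹^2 * ((a-b)^2 + E)) := by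
        rw [← h1, Real.sqrt_sq (norm_nonneg _)]
      have e2 : ‖(Z⁻¹ • (a • y j + b • ∑ m ∈ Finset.univ.erase j, y m) :
          EuclideanSpace ℝ (Fin dd))‖ = Real.sqrt (Z⁻¹^2 * ((a-b)^2 + E)) := by
        rw [← h2, Real.sqrt_sq (norm_nonneg _)]
      rw [e1, e2]
    rw [heq, ← sq, h2]
  rw [hipij, hnn, mul_div_mul_left _ _ (by positivity : (Z⁻¹)^2 ≠ 0)]
  have hq2 : (a-b)^2 ≠ 0 := by positivity
  have e1 : ρ + E/(a-b)^2 = ((a-b)^2*ρ + E)/(a-b)^2 := by field_simp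
  have e2 : 1 + E/(a-b)^2 = ((a-b)^2 + E)/(a-b)^2 := by field_simp
  rw [e1, e2, div_div_div_cancel_right₀]
  exact hq2

theorem stmt6 (ρ γ : ℝ) (hρ : ρ ∈ Set.Ioo (0:ℝ) 1) (hγ : 1 / (1 - ρ) < γ)
    (d : ℕ → ℕ) (y : (n : ℕ) → Fin (n + 2) → EuclideanSpace ℝ (Fin (d n)))
    (hunit : ∀ n i, ‖y n i‖ = 1)
    (hinner : ∀ n, ∀ i j : Fin (n + 2), i ≠ j → ⟪y n i, y n j⟫ = ρ)
    (i j : (n : ℕ) → Fin (n + 2)) (hij : ∀ n, i n ≠ j n) :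
    Filter.Tendsto (fun n : ℕ =>
      let β : ℝ := γ * Real.log (n + 2)
      let Z : ℝ := Real.exp β + ((n : ℝ) + 1) * Real.exp (ρ * β)
      let x' : Fin (n + 2) → EuclideanSpace ℝ (Fin (d n)) := fun k =>
        Z⁻¹ • (Real.exp β • y n k +
          Real.exp (ρ * β) • ∑ m ∈ Finset.univ.erase k, y n m)
      ⟪x' (i n), x' (j n)⟫ / (‖x' (i n)‖ * ‖x' (j n)‖))
      Filter.atTop (nhds ρ) := by
  obtain ⟨hρ0, hρ1⟩ := hρ
  have h1ρ : (0:ℝ) < 1 - ρ := by linarith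
  have hγ0 : 0 < γ := lt_trans (by positivity) hγ
  have hδ : 1 < γ * (1 - ρ) := by
    rw [div_lt_iff₀ h1ρ] at hγ; linarith
  set v : ℕ → ℝ := fun n => ((n:ℝ)+2) ^ (ρ*γ - γ) with hv_def
  set u : ℕ → ℝ := fun n => v n / (1 - v n) with hu_def
  set c : ℕ → ℝ := fun n => 1 + ((n:ℝ)+1)*ρ with hc_def
  set e : ℕ → ℝ := fun n => 2 * c n * u n + ((n:ℝ)+2) * c n * (u n)^2 with he_def
  have hN : Tendsto (fun n : ℕ => (n:ℝ)+2) atTop atTop :=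
    tendsto_atTop_add_const_right _ 2 tendsto_natCast_atTop_atTop
  have hv : Tendsto v atTop (nhds 0) := by
    have h := (tendsto_rpow_neg_atTop (y := γ - ρ*γ) (by nlinarith)).comp hN
    refine h.congr fun n => ?_
    simp only [Function.comp_apply, hv_def]
    congr 1
    ring
  have hNv : Tendsto (fun n : ℕ => ((n:ℝ)+2) * v n) atTop (nhds 0) := by
    have h := (tendsto_rpow_neg_atTop (y := γ - ρ*γ - 1) (by nlinarith)).comp hN
    refine h.congr fun n => ?_
    have h2 : (0:ℝ) < (n:ℝ)+2 := by positivity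
    simp only [Function.comp_apply, hv_def]
    rw [show -(γ - ρ*γ - 1) = 1 + (ρ*γ - γ) by ring, Real.rpow_add h2, Real.rpow_one]
  have hden : Tendsto (fun n => 1 - v n) atTop (nhds 1) := by
    have := tendsto_const_nhds (x := (1:ℝ)) (f := atTop (α := ℕ)) |>.sub hv
    simpa using this
  have hcv : Tendsto (fun n => c n * v n) atTop (nhds 0) := by
    have h := (hv.const_mul (1-ρ)).add (hNv.const_mul ρ)
    have h0 : (1-ρ) * 0 + ρ * 0 = (0:ℝ) := by ring
    rw [h0] at h
    refine h.congr fun n => ?_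
    simp only [hc_def]
    ring
  have hcu : Tendsto (fun n => c n * u n) atTop (nhds 0) := by
    have h := hcv.div hden one_ne_zero
    rw [zero_div] at h
    refine h.congr fun n => ?_
    simp only [Pi.div_apply, hu_def]
    ring
  have hNu : Tendsto (fun n : ℕ => ((n:ℝ)+2) * u n) atTop (nhds 0) := by
    have h := hNv.div hden one_ne_zero
    rw [zero_div] at h
    refine h.congr fun n => ?_
    simp only [Pi.div_apply, hu_def]
    ring
  have he : Tendsto e atTop (nhds 0) := by
    have h := (hcu.const_mul 2).add (hNu.mul hcu)
    have h0 : 2 * 0 + 0 * 0 = (0:ℝ) := by ring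
    rw [h0] at h
    refine h.congr fun n => ?_
    simp only [he_def]
    ring
  have hfinal : Tendsto (fun n => (ρ + e n)/(1 + e n)) atTop (nhds ρ) := by
    have h := (tendsto_const_nhds (x := ρ) (f := atTop (α := ℕ)) |>.add he).div
      (tendsto_const_nhds (x := (1:ℝ)) (f := atTop (α := ℕ)) |>.add he) (by norm_num)
    simp only [add_zero, div_one] at h
    exact h
  refine hfinal.congr fun n => ?_
  have hn2 : (0:ℝ) < (n:ℝ) + 2 := by positivity
  have hlog : 0 < Real.log ((n:ℝ)+2) := Real.log_pos (by
    have : (0:ℝ) ≤ (n:ℝ) := Nat.cast_nonneg n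
    linarith)
  have hβpos : 0 < γ * Real.log ((n:ℝ)+2) := mul_pos hγ0 hlog
  have hb : 0 < Real.exp (ρ * (γ * Real.log ((n:ℝ)+2))) := Real.exp_pos _
  have hba : Real.exp (ρ * (γ * Real.log ((n:ℝ)+2))) < Real.exp (γ * Real.log ((n:ℝ)+2)) := by
    apply Real.exp_lt_exp.mpr
    nlinarith
  have hq : 0 < Real.exp (γ * Real.log ((n:ℝ)+2)) - Real.exp (ρ * (γ * Real.log ((n:ℝ)+2))) :=
    sub_pos.mpr hba
  have hc' : 0 < 1 + ((n:ℝ)+1)*ρ := by positivity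
  have hform := cos_formula (N := n) (dd := d n) ρ
    (Real.exp (γ * Real.log ((n:ℝ)+2))) (Real.exp (ρ * (γ * Real.log ((n:ℝ)+2))))
    (Real.exp (γ * Real.log ((n:ℝ)+2)) + ((n:ℝ)+1) * Real.exp (ρ * (γ * Real.log ((n:ℝ)+2))))
    (y n) (hunit n) (hinner n) hb hba rfl hc' (i n) (j n) (hij n)
  set a : ℝ := Real.exp (γ * Real.log ((n:ℝ)+2)) with ha_def
  set b : ℝ := Real.exp (ρ * (γ * Real.log ((n:ℝ)+2))) with hb_def
  have ha0 : (0:ℝ) < a := Real.exp_pos _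
  have hva : b / a = v n := by
    rw [ha_def, hb_def, ← Real.exp_sub, hv_def]
    simp only
    rw [Real.rpow_def_of_pos hn2]
    congr 1
    ring
  have hu : b / (a - b) = u n := by
    rw [hu_def]
    simp only
    rw [← hva]
    field_simp
  have hW : (2*(a-b)*b*(1+((n:ℝ)+1)*ρ) + b^2*((n:ℝ)+2)*(1+((n:ℝ)+1)*ρ))/(a-b)^2
      = e n := by
    have : (2*(a-b)*b*(1+((n:ℝ)+1)*ρ) + b^2*((n:ℝ)+2)*(1+((n:ℝ)+1)*ρ))/(a-b)^2
        = 2*(c n)*(b/(a-b)) + ((n:ℝ)+2)*(c n)*(b/(a-b))^2 := by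
      simp only [hc_def]
      field_simp
    rw [this, hu, he_def]
  rw [hW] at hform
  exact hform.symm
end

section
/- Fix $\rho \in (0,1)$, set $\gamma = \frac{1}{1-\rho}$, and for each $n \ge 2$ let $y_1^{(n)},\dots,y_n^{(n)}$ be unit vectors with pairwise inner product $\rho$. Let $\beta_n = \gamma\log n$, $Z_n = e^{\beta_n} + (n-1)e^{\rho\beta_n}$, and $x_i' = Z_n^{-1}(e^{\beta_n} y_i + e^{\rho\beta_n}\sum_{m\ne i} y_m)$. Then for any $i \ne j$, $\langle x_i'/\|x_i'\|, x_j'/\|x_j'\|\rangle \to \frac{4\rho}{1+3\rho}$ as $n \to \infty$. -/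
open scoped RealInnerProductSpace BigOperators

private lemma expand_inner7 {E : Type*} [NormedAddCommGroup E] [InnerProductSpace ℝ E]
    (z a b : ℝ) (u v U V : E) :
    ⟪z • (a • u + b • U), z • (a • v + b • V)⟫ =
      z * z * (a * a * ⟪u, v⟫ + a * b * ⟪u, V⟫ + b * a * ⟪U, v⟫ + b * b * ⟪U, V⟫) := by
  simp only [real_inner_smul_left, real_inner_smul_right, inner_add_left, inner_add_right]
  ring

theorem stmt7 (ρ γ : ℝ) (hρ : ρ ∈ Set.Ioo (0:ℝ) 1) (hγ : γ = 1 / (1 - ρ))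
    (d : ℕ → ℕ) (y : (n : ℕ) → Fin (n + 2) → EuclideanSpace ℝ (Fin (d n)))
    (hunit : ∀ n i, ‖y n i‖ = 1)
    (hinner : ∀ n, ∀ i j : Fin (n + 2), i ≠ j → ⟪y n i, y n j⟫ = ρ)
    (i j : (n : ℕ) → Fin (n + 2)) (hij : ∀ n, i n ≠ j n) :
    Filter.Tendsto (fun n : ℕ =>
      let β : ℝ := γ * Real.log (n + 2)
      let Z : ℝ := Real.exp β + ((n : ℝ) + 1) * Real.exp (ρ * β)
      let x' : Fin (n + 2) → EuclideanSpace ℝ (Fin (d n)) := fun k =>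
        Z⁻¹ • (Real.exp β • y n k +
          Real.exp (ρ * β) • ∑ m ∈ Finset.univ.erase k, y n m)
      ⟪x' (i n), x' (j n)⟫ / (‖x' (i n)‖ * ‖x' (j n)‖))
      Filter.atTop (nhds (4 * ρ / (1 + 3 * ρ))) := by
  obtain ⟨hρ0, hρ1⟩ := hρ
  have h1ρ : (0:ℝ) < 1 - ρ := by linarith
  have hγ' : γ = 1 + ρ * γ := by
    rw [hγ]; field_simp; ring
  set P : ℕ → ℝ := fun n => 4*ρ*((n:ℝ)+2)^2 + (3-7*ρ)*((n:ℝ)+2) + (3*ρ-2) with hP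
  set Q : ℕ → ℝ := fun n => (1+3*ρ)*((n:ℝ)+2)^2 + (1-5*ρ)*((n:ℝ)+2) + (2*ρ-1) with hQ
  have hmain : (fun n : ℕ =>
      let β : ℝ := γ * Real.log (n + 2)
      let Z : ℝ := Real.exp β + ((n : ℝ) + 1) * Real.exp (ρ * β)
      let x' : Fin (n + 2) → EuclideanSpace ℝ (Fin (d n)) := fun k =>
        Z⁻¹ • (Real.exp β • y n k +
          Real.exp (ρ * β) • ∑ m ∈ Finset.univ.erase k, y n m)
      ⟪x' (i n), x' (j n)⟫ / (‖x' (i n)‖ * ‖x' (j n)‖)) = fun n => P n / Q n := by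
    funext n
    simp only []
    set β : ℝ := γ * Real.log ((n:ℝ) + 2) with hβ
    set a : ℝ := Real.exp β with ha
    set b : ℝ := Real.exp (ρ * β) with hb
    set Z : ℝ := a + ((n : ℝ) + 1) * b with hZ
    have hNpos : (0:ℝ) < (n:ℝ) + 2 := by positivity
    have hapos : 0 < a := Real.exp_pos _
    have hbpos : 0 < b := Real.exp_pos _
    have hab : a = ((n:ℝ)+2) * b := by
      rw [ha, hb, hβ]
      nth_rewrite 1 [hγ']
      rw [add_mul, one_mul, Real.exp_add, Real.exp_log hNpos, mul_assoc]
    have hZpos : 0 < Z := by rw [hZ]; positivity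
    -- basic inner products
    have hyy : ∀ k : Fin (n+2), ⟪y n k, y n k⟫ = 1 := by
      intro k; rw [real_inner_self_eq_norm_mul_norm, hunit, one_mul]
    have hyS_same : ∀ k : Fin (n+2),
        ⟪y n k, ∑ m ∈ Finset.univ.erase k, y n m⟫ = ((n:ℝ)+1) * ρ := by
      intro k
      rw [inner_sum,
        Finset.sum_congr rfl (fun m hm => hinner n k m (Ne.symm (Finset.ne_of_mem_erase hm))),
        Finset.sum_const, Finset.card_erase_of_mem (Finset.mem_univ k), Finset.card_univ,
        Fintype.card_fin]
      push_cast; ring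
    have hyS_ne : ∀ k l : Fin (n+2), k ≠ l →
        ⟪y n k, ∑ m ∈ Finset.univ.erase l, y n m⟫ = 1 + (n:ℝ) * ρ := by
      intro k l hkl
      have hk : k ∈ Finset.univ.erase l := Finset.mem_erase.2 ⟨hkl, Finset.mem_univ k⟩
      rw [← Finset.add_sum_erase _ _ hk, inner_add_right, hyy, inner_sum,
        Finset.sum_congr rfl (fun m hm => hinner n k m
          (Ne.symm (Finset.ne_of_mem_erase hm))),
        Finset.sum_const, Finset.card_erase_of_mem hk,
        Finset.card_erase_of_mem (Finset.mem_univ l), Finset.card_univ, Fintype.card_fin]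
      push_cast; ring
    have hSy_same : ∀ k : Fin (n+2),
        ⟪∑ m ∈ Finset.univ.erase k, y n m, y n k⟫ = ((n:ℝ)+1) * ρ := by
      intro k; rw [real_inner_comm]; exact hyS_same k
    have hSy_ne : ∀ k l : Fin (n+2), k ≠ l →
        ⟪∑ m ∈ Finset.univ.erase k, y n m, y n l⟫ = 1 + (n:ℝ) * ρ := by
      intro k l hkl; rw [real_inner_comm]; exact hyS_ne l k hkl.symm
    have hSS_same : ∀ k : Fin (n+2),
        ⟪∑ m ∈ Finset.univ.erase k, y n m, ∑ m ∈ Finset.univ.erase k, y n m⟫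
          = ((n:ℝ)+1) * (1 + (n:ℝ)*ρ) := by
      intro k
      rw [sum_inner,
        Finset.sum_congr rfl (fun m hm => hyS_ne m k (Finset.ne_of_mem_erase hm)),
        Finset.sum_const, Finset.card_erase_of_mem (Finset.mem_univ k), Finset.card_univ,
        Fintype.card_fin]
      push_cast; ring
    have hSS_ne : ∀ k l : Fin (n+2), k ≠ l →
        ⟪∑ m ∈ Finset.univ.erase k, y n m, ∑ m ∈ Finset.univ.erase l, y n m⟫
          = ((n:ℝ)+1)*ρ + (n:ℝ) * (1 + (n:ℝ)*ρ) := by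
      intro k l hkl
      have hl : l ∈ Finset.univ.erase k := Finset.mem_erase.2 ⟨hkl.symm, Finset.mem_univ l⟩
      rw [sum_inner, ← Finset.add_sum_erase _ _ hl, hyS_same,
        Finset.sum_congr rfl (fun m hm => hyS_ne m l (Finset.ne_of_mem_erase hm)),
        Finset.sum_const, Finset.card_erase_of_mem hl,
        Finset.card_erase_of_mem (Finset.mem_univ k), Finset.card_univ, Fintype.card_fin]
      push_cast; ring
    set xi : EuclideanSpace ℝ (Fin (d n)) :=
      Z⁻¹ • (a • y n (i n) + b • ∑ m ∈ Finset.univ.erase (i n), y n m) with hxi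
    set xj : EuclideanSpace ℝ (Fin (d n)) :=
      Z⁻¹ • (a • y n (j n) + b • ∑ m ∈ Finset.univ.erase (j n), y n m) with hxj
    set c : ℝ := Z⁻¹ * Z⁻¹ * (b * b) with hc
    have hcne : c ≠ 0 := by rw [hc]; positivity
    have hij' := hij n
    have hnum : ⟪xi, xj⟫ = c * P n := by
      rw [hxi, hxj, expand_inner7, hinner n _ _ hij', hyS_ne _ _ hij',
        hSy_ne _ _ hij', hSS_ne _ _ hij', hab, hc, hP]
      ring
    have hqi : ⟪xi, xi⟫ = c * Q n := by
      rw [hxi, expand_inner7, hyy, hyS_same, hSy_same, hSS_same, hab, hc, hQ]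
      ring
    have hqj : ⟪xj, xj⟫ = c * Q n := by
      rw [hxj, expand_inner7, hyy, hyS_same, hSy_same, hSS_same, hab, hc, hQ]
      ring
    have hnormeq : ‖xi‖ = ‖xj‖ := by
      have h1 : ‖xi‖ * ‖xi‖ = ‖xj‖ * ‖xj‖ := by
        rw [← real_inner_self_eq_norm_mul_norm, ← real_inner_self_eq_norm_mul_norm, hqi, hqj]
      exact (mul_self_inj (norm_nonneg _) (norm_nonneg _)).1 h1
    have hden : ‖xi‖ * ‖xj‖ = c * Q n := by
      rw [← hnormeq, ← real_inner_self_eq_norm_mul_norm, hqi]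
    rw [hnum, hden, mul_div_mul_left _ _ hcne]
  rw [hmain]
  -- limit computation
  have hNt : Filter.Tendsto (fun n : ℕ => (n:ℝ) + 2) Filter.atTop Filter.atTop :=
    Filter.tendsto_atTop_add_const_right _ 2 tendsto_natCast_atTop_atTop
  have hf : Filter.Tendsto (fun N : ℝ =>
      (4*ρ + (3-7*ρ)/N + (3*ρ-2)/(N*N)) / ((1+3*ρ) + (1-5*ρ)/N + (2*ρ-1)/(N*N)))
      Filter.atTop (nhds ((4*ρ + 0 + 0) / ((1+3*ρ) + 0 + 0))) := by
    apply Filter.Tendsto.div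
    · exact (tendsto_const_nhds.add (Filter.Tendsto.div_atTop tendsto_const_nhds
        Filter.tendsto_id)).add (Filter.Tendsto.div_atTop tendsto_const_nhds
        (Filter.Tendsto.atTop_mul_atTop₀ Filter.tendsto_id Filter.tendsto_id))
    · exact (tendsto_const_nhds.add (Filter.Tendsto.div_atTop tendsto_const_nhds
        Filter.tendsto_id)).add (Filter.Tendsto.div_atTop tendsto_const_nhds
        (Filter.Tendsto.atTop_mul_atTop₀ Filter.tendsto_id Filter.tendsto_id))
    · intro h; rw [add_zero, add_zero] at h; linarith
  have hlim := hf.comp hNt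
  have heq : (fun n : ℕ =>
      (4*ρ + (3-7*ρ)/((n:ℝ)+2) + (3*ρ-2)/(((n:ℝ)+2)*((n:ℝ)+2))) /
      ((1+3*ρ) + (1-5*ρ)/((n:ℝ)+2) + (2*ρ-1)/(((n:ℝ)+2)*((n:ℝ)+2)))) = fun n => P n / Q n := by
    funext n
    have hNpos : (0:ℝ) < (n:ℝ) + 2 := by positivity
    have hnum' : 4*ρ + (3-7*ρ)/((n:ℝ)+2) + (3*ρ-2)/(((n:ℝ)+2)*((n:ℝ)+2))
        = P n / (((n:ℝ)+2)*((n:ℝ)+2)) := by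
      rw [hP]; field_simp
    have hden' : (1+3*ρ) + (1-5*ρ)/((n:ℝ)+2) + (2*ρ-1)/(((n:ℝ)+2)*((n:ℝ)+2))
        = Q n / (((n:ℝ)+2)*((n:ℝ)+2)) := by
      rw [hQ]; field_simp
    rw [hnum', hden', div_div_div_cancel_right₀]
    positivity
  rw [← heq]
  convert hlim using 2
  all_goals norm_num
end

section
/- Fix $\rho \in (0,1)$, $q > 0$, $\alpha \ge 0$, and $\gamma$ with $0 < \gamma < \frac{1}{1-\rho}$. For each $n \ge 2$ let $x_1,\dots,x_n \in \mathbb{R}^d$ satisfy $\|x_i\|^2 = q$ and $\langle x_i/\|x_i\|, x_j/\|x_j\|\rangle = \rho$ for $i \ne j$. With $y_i = x_i/\|x_i\|$, $\beta_n = \gamma\log n$, $Z_n = e^{\beta_n} + (n-1)e^{\rho\beta_n}$, and $x_i' = \alpha x_i + Z_n^{-1}(e^{\beta_n}y_i + e^{\rho\beta_n}\sum_{m\ne i}y_m)$, for any $i \ne j$: $\langle x_i'/\|x_i'\|, x_j'/\|x_j'\|\rangle \to \frac{\rho(\alpha\sqrt{q}+1)^2}{\alpha^2 q + 2\alpha\sqrt{q}\rho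 + \rho}$ as $n \to \infty$. -/
open scoped RealInnerProductSpace BigOperators

theorem stmt8 (ρ q α γ : ℝ) (hρ : ρ ∈ Set.Ioo (0:ℝ) 1) (hq : 0 < q)
    (hα : 0 ≤ α) (hγ0 : 0 < γ) (hγ : γ < 1 / (1 - ρ))
    (d : ℕ → ℕ) (x : (n : ℕ) → Fin (n + 2) → EuclideanSpace ℝ (Fin (d n)))
    (hnorm : ∀ n i, ‖x n i‖ ^ 2 = q)
    (hcos : ∀ n, ∀ i j : Fin (n + 2), i ≠ j →
      ⟪(‖x n i‖⁻¹ • x n i : EuclideanSpace ℝ (Fin (d n))), ‖x n j‖⁻¹ • x n j⟫ = ρ)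
    (i j : (n : ℕ) → Fin (n + 2)) (hij : ∀ n, i n ≠ j n) :
    Filter.Tendsto (fun n : ℕ =>
      let β : ℝ := γ * Real.log (n + 2)
      let Z : ℝ := Real.exp β + ((n : ℝ) + 1) * Real.exp (ρ * β)
      let y : Fin (n + 2) → EuclideanSpace ℝ (Fin (d n)) := fun k => ‖x n k‖⁻¹ • x n k
      let x' : Fin (n + 2) → EuclideanSpace ℝ (Fin (d n)) := fun k =>
        α • x n k + Z⁻¹ • (Real.exp β • y k +
          Real.exp (ρ * β) • ∑ m ∈ Finset.univ.erase k, y m)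
      ⟪x' (i n), x' (j n)⟫ / (‖x' (i n)‖ * ‖x' (j n)‖))
      Filter.atTop
      (nhds (ρ * (α * Real.sqrt q + 1) ^ 2 /
        (α ^ 2 * q + 2 * α * Real.sqrt q * ρ + ρ))) := by
  obtain ⟨hρ0, hρ1⟩ := hρ
  have hρ' : 0 < 1 - ρ := by linarith
  have hsq : 0 < Real.sqrt q := Real.sqrt_pos.mpr hq
  set A : ℝ := α * Real.sqrt q with hA
  have hA0 : 0 ≤ A := mul_nonneg hα hsq.le
  -- real sequences
  set E1 : ℕ → ℝ := fun n => Real.exp (γ * Real.log ((n : ℝ) + 2)) with hE1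
  set E2 : ℕ → ℝ := fun n => Real.exp (ρ * (γ * Real.log ((n : ℝ) + 2))) with hE2
  set Z : ℕ → ℝ := fun n => E1 n + ((n : ℝ) + 1) * E2 n with hZdef
  have hE1p : ∀ n, 0 < E1 n := fun n => Real.exp_pos _
  have hE2p : ∀ n, 0 < E2 n := fun n => Real.exp_pos _
  have hn1 : ∀ n : ℕ, (0:ℝ) < (n:ℝ) + 1 := fun n => by positivity
  have hZp : ∀ n, 0 < Z n := fun n =>
    add_pos (hE1p n) (mul_pos (hn1 n) (hE2p n))
  set u : ℕ → ℝ := fun n => A + (E1 n - E2 n) / Z n with hu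
  set v : ℕ → ℝ := fun n => E2 n / Z n with hv
  set s : ℕ → ℝ := fun n => 1 + ((n : ℝ) + 1) * ρ with hs
  set num : ℕ → ℝ := fun n =>
    (u n * u n) * ρ + (2 * u n) * (v n * s n) + (v n * ((n:ℝ)+2)) * (v n * s n) with hnum
  set den : ℕ → ℝ := fun n =>
    (u n * u n) + (2 * u n) * (v n * s n) + (v n * ((n:ℝ)+2)) * (v n * s n) with hden
  -- the unit vectors and the updated tokens
  set y' : (n : ℕ) → Fin (n+2) → EuclideanSpace ℝ (Fin (d n)) :=
    fun n k => ‖x n k‖⁻¹ • x n k with hy'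
  set x'' : (n : ℕ) → Fin (n+2) → EuclideanSpace ℝ (Fin (d n)) := fun n k =>
    α • x n k + (Z n)⁻¹ • (E1 n • y' n k + E2 n • ∑ m ∈ Finset.univ.erase k, y' n m)
    with hx''def
  -- pointwise identity
  have key : ∀ n : ℕ,
      num n / den n = ⟪x'' n (i n), x'' n (j n)⟫ / (‖x'' n (i n)‖ * ‖x'' n (j n)‖) := by
    intro n
    have hxn : ∀ k, ‖x n k‖ = Real.sqrt q := by
      intro k
      rw [← Real.sqrt_sq (norm_nonneg (x n k)), hnorm n k]
    have hnz : ∀ k, ‖x n k‖ ≠ 0 := fun k => by rw [hxn k]; exact hsq.ne'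
    have hy1 : ∀ k l : Fin (n+2), ⟪y' n k, y' n l⟫ = if k = l then 1 else ρ := by
      intro k l
      by_cases h : k = l
      · subst h
        rw [if_pos rfl, hy']
        simp only []
        rw [real_inner_smul_left, real_inner_smul_right,
          real_inner_self_eq_norm_sq, hxn k, sq]
        field_simp
      · rw [if_neg h]; exact hcos n k l h
    have hyS : ∀ k : Fin (n+2), ⟪y' n k, ∑ m, y' n m⟫ = 1 + ((n:ℝ)+1) * ρ := by
      intro k
      rw [inner_sum]
      have h1 : ∀ m ∈ (Finset.univ : Finset (Fin (n+2))),
          ⟪y' n k, y' n m⟫ = ρ + if k = m then 1 - ρ else 0 := by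
        intro m _
        rw [hy1 k m]; split <;> ring
      rw [Finset.sum_congr rfl h1, Finset.sum_add_distrib, Finset.sum_const,
        Finset.sum_ite_eq, if_pos (Finset.mem_univ k)]
      simp only [Finset.card_univ, Fintype.card_fin, nsmul_eq_mul]
      push_cast; ring
    have hSy : ∀ k : Fin (n+2), ⟪∑ m, y' n m, y' n k⟫ = 1 + ((n:ℝ)+1) * ρ := by
      intro k; rw [real_inner_comm]; exact hyS k
    have hSS : ⟪∑ m, y' n m, (∑ m, y' n m : EuclideanSpace ℝ (Fin (d n)))⟫
        = ((n:ℝ)+2) * (1 + ((n:ℝ)+1) * ρ) := by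
      rw [sum_inner, Finset.sum_congr rfl (fun k _ => hyS k), Finset.sum_const]
      simp only [Finset.card_univ, Fintype.card_fin, nsmul_eq_mul]
      push_cast; ring
    have hx'eq : ∀ k, x'' n k = u n • y' n k + v n • ∑ m, y' n m := by
      intro k
      have h1 : (∑ m ∈ Finset.univ.erase k, y' n m)
          = (∑ m, y' n m) - y' n k := Finset.sum_erase_eq_sub (Finset.mem_univ k)
      have h2 : α • x n k = A • y' n k := by
        rw [hy', hA]
        simp only []
        rw [smul_smul, hxn k, mul_inv_cancel_right₀ hsq.ne']
      have hZne : Z n ≠ 0 := (hZp n).ne'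
      rw [hx''def]
      simp only []
      rw [h1, h2]
      simp only [hu, hv]
      match_scalars <;> ring
    have hinner_ij : ⟪x'' n (i n), x'' n (j n)⟫ = num n := by
      rw [hx'eq, hx'eq]
      simp only [inner_add_left, inner_add_right, real_inner_smul_left,
        real_inner_smul_right]
      rw [hy1 (i n) (j n), if_neg (hij n), hyS, hSy, hSS]
      simp only [hnum, hs]
      ring
    have hinner_kk : ∀ k, ⟪x'' n k, x'' n k⟫ = den n := by
      intro k
      rw [hx'eq]
      simp only [inner_add_left, inner_add_right, real_inner_smul_left,
        real_inner_smul_right]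
      rw [hy1 k k, if_pos rfl, hyS, hSy, hSS]
      simp only [hden, hs]
      ring
    have hden0 : 0 ≤ den n := by
      rw [← hinner_kk (i n)]; exact real_inner_self_nonneg
    have hni : ‖x'' n (i n)‖ = Real.sqrt (den n) := by
      rw [← hinner_kk (i n), real_inner_self_eq_norm_sq,
        Real.sqrt_sq (norm_nonneg _)]
    have hnj : ‖x'' n (j n)‖ = Real.sqrt (den n) := by
      rw [← hinner_kk (j n), real_inner_self_eq_norm_sq,
        Real.sqrt_sq (norm_nonneg _)]
    rw [hinner_ij, hni, hnj, Real.mul_self_sqrt hden0]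
  -- limits
  have hβ0 : ∀ n : ℕ, 0 ≤ γ * Real.log ((n:ℝ)+2) := by
    intro n
    exact mul_nonneg hγ0.le (Real.log_nonneg (by linarith [Nat.cast_nonneg (α := ℝ) n]))
  have hE21 : ∀ n, E2 n ≤ E1 n := by
    intro n
    exact Real.exp_le_exp.mpr (by nlinarith [hβ0 n])
  set c : ℝ := γ * (1 - ρ) with hc
  have hc1 : c < 1 := by
    rw [hc]
    calc γ * (1 - ρ) < (1 / (1-ρ)) * (1 - ρ) := mul_lt_mul_of_pos_right hγ hρ'
      _ = 1 := by field_simp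
  set b : ℕ → ℝ := fun n => ((n:ℝ)+2) ^ c / ((n:ℝ)+1) with hb
  have hbound : ∀ n, E1 n / Z n ≤ b n := by
    intro n
    have hle : ((n:ℝ)+1) * E2 n ≤ Z n := by
      simp only [hZdef]
      linarith [(hE1p n).le]
    have h1 : E1 n / Z n ≤ E1 n / (((n:ℝ)+1) * E2 n) :=
      div_le_div_of_nonneg_left (hE1p n).le (mul_pos (hn1 n) (hE2p n)) hle
    refine h1.trans (le_of_eq ?_)
    have h2 : ((n:ℝ)+2) ^ c = E1 n / E2 n := by
      rw [Real.rpow_def_of_pos (by positivity), hE1, hE2, ← Real.exp_sub]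
      congr 1
      ring
    simp only [hb]
    rw [h2, div_div, mul_comm (E2 n)]
  have hTn2 : Filter.Tendsto (fun n : ℕ => (n:ℝ)+2) Filter.atTop Filter.atTop :=
    Filter.tendsto_atTop_add_const_right _ 2 tendsto_natCast_atTop_atTop
  have hT2 : Filter.Tendsto (fun n : ℕ => ((n:ℝ)+2)/((n:ℝ)+1))
      Filter.atTop (nhds 1) := by
    have h0 : Filter.Tendsto (fun n : ℕ => 1 + 1/((n:ℝ)+1)) Filter.atTop (nhds (1+0)) :=
      tendsto_one_div_add_atTop_nhds_zero_nat.const_add 1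
    rw [add_zero] at h0
    refine h0.congr fun n => ?_
    have h1 : ((n:ℝ)+1) ≠ 0 := (hn1 n).ne'
    field_simp
    ring
  have hTb : Filter.Tendsto b Filter.atTop (nhds 0) := by
    have h1 : Filter.Tendsto (fun n : ℕ => ((n:ℝ)+2) ^ (c-1))
        Filter.atTop (nhds 0) := by
      have := (tendsto_rpow_neg_atTop (y := 1 - c) (by linarith)).comp hTn2
      simpa [Function.comp_def, neg_sub] using this
    have h0 := h1.mul hT2
    rw [mul_one] at h0
    refine h0.congr fun n => ?_
    have h2 : ((n:ℝ)+2) ^ c = ((n:ℝ)+2) ^ (c-1) * ((n:ℝ)+2) := by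
      rw [← Real.rpow_add_one (by positivity : ((n:ℝ)+2) ≠ 0)]
      congr 1; ring
    simp only [hb]
    rw [h2]
    ring
  have L1 : Filter.Tendsto (fun n => E1 n / Z n) Filter.atTop (nhds 0) :=
    squeeze_zero (fun n => by positivity) hbound hTb
  have L1' : Filter.Tendsto (fun n => E2 n / Z n) Filter.atTop (nhds 0) :=
    squeeze_zero (fun n => by positivity)
      (fun n => div_le_div₀ (hE1p n).le (hE21 n) (hZp n) le_rfl) L1
  have L2 : Filter.Tendsto (fun n : ℕ => ((n:ℝ)+1) * E2 n / Z n) Filter.atTop (nhds 1) := by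
    have h0 : Filter.Tendsto (fun n : ℕ => 1 - E1 n / Z n) Filter.atTop
        (nhds (1 - 0)) := L1.const_sub 1
    rw [sub_zero] at h0
    refine h0.congr fun n => ?_
    have hZne : Z n ≠ 0 := (hZp n).ne'
    simp only [hZdef] at hZne ⊢
    field_simp
    ring
  have Lu : Filter.Tendsto u Filter.atTop (nhds A) := by
    have h0 : Filter.Tendsto (fun n : ℕ => A + E1 n / Z n - E2 n / Z n)
        Filter.atTop (nhds (A + 0 - 0)) := (L1.const_add A).sub L1'
    rw [add_zero, sub_zero] at h0
    refine h0.congr fun n => ?_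
    simp only [hu]
    ring
  have Lvs : Filter.Tendsto (fun n => v n * s n) Filter.atTop (nhds ρ) := by
    have h0 := L1'.add (L2.mul_const ρ)
    rw [zero_add, one_mul] at h0
    refine h0.congr fun n => ?_
    simp only [hv, hs]
    ring
  have LvN : Filter.Tendsto (fun n => v n * ((n:ℝ)+2)) Filter.atTop (nhds 1) := by
    have h0 := L2.mul hT2
    rw [mul_one] at h0
    refine h0.congr fun n => ?_
    simp only [hv]
    have : ((n:ℝ)+1) ≠ 0 := (hn1 n).ne'
    field_simp
  have Lnum : Filter.Tendsto num Filter.atTop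
      (nhds ((A * A) * ρ + (2 * A) * ρ + 1 * ρ)) :=
    (((Lu.mul Lu).mul_const ρ).add ((Lu.const_mul 2).mul Lvs)).add (LvN.mul Lvs)
  have Lden : Filter.Tendsto den Filter.atTop
      (nhds ((A * A) + (2 * A) * ρ + 1 * ρ)) :=
    ((Lu.mul Lu).add ((Lu.const_mul 2).mul Lvs)).add (LvN.mul Lvs)
  have hDne : (A * A) + (2 * A) * ρ + 1 * ρ ≠ 0 := by nlinarith
  have hfin := Lnum.div Lden hDne
  have heq : ρ * (α * Real.sqrt q + 1) ^ 2 /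
      (α ^ 2 * q + 2 * α * Real.sqrt q * ρ + ρ)
      = ((A * A) * ρ + (2 * A) * ρ + 1 * ρ) / ((A * A) + (2 * A) * ρ + 1 * ρ) := by
    have hqq : Real.sqrt q ^ 2 = q := Real.sq_sqrt hq.le
    rw [hA, show α ^ 2 * q = α ^ 2 * (Real.sqrt q ^ 2) from by rw [hqq]]
    congr 1 <;> ring
  rw [heq]
  exact hfin.congr key
end

section
/- Let $0 < \rho_1 \le \rho_2 < 1$ and $\gamma > \frac{1}{1-\rho_2}$. For each $n$, let $y_1,\dots,y_n$ be unit vectors in $\mathbb{R}^d$ with $\rho_1 \le \langle y_i,y_j\rangle \le \rho_2$ for all $i \ne j$. Let $\beta = \gamma\log n$ and $\mathsf{ATT}(y_i) = \left(\sum_k e^{\beta\langle y_i,y_k\rangle}\right)^{-1}\sum_j e^{\beta\langle y_i,y_j\rangle}y_j$. Then $\max_i \|\mathsf{ATT}(y_i) - y_i\| \le C_1 n^{-C_2}$ for positive constants $C_1, C_2$ depending only on $\gamma$ and $\rho_2$. -/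
open scoped RealInnerProductSpace BigOperators

theorem stmt11 (ρ₁ ρ₂ γ : ℝ) (h1 : 0 < ρ₁) (h12 : ρ₁ ≤ ρ₂) (h2 : ρ₂ < 1)
    (hγ : 1 / (1 - ρ₂) < γ) :
    ∃ C₁ > (0:ℝ), ∃ C₂ > (0:ℝ),
      ∀ (n d : ℕ) (y : Fin n → EuclideanSpace ℝ (Fin d)),
        (∀ i, ‖y i‖ = 1) →
        (∀ i j : Fin n, i ≠ j → ρ₁ ≤ ⟪y i, y j⟫ ∧ ⟪y i, y j⟫ ≤ ρ₂) →
        ∀ i : Fin n,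
          ‖(∑ k, Real.exp ((γ * Real.log n) * ⟪y i, y k⟫))⁻¹ •
              (∑ j, Real.exp ((γ * Real.log n) * ⟪y i, y j⟫) • y j) - y i‖
            ≤ C₁ * (n : ℝ) ^ (-C₂) := by
  have hρ : (0:ℝ) < 1 - ρ₂ := by linarith
  have hγ1 : 1 < γ * (1 - ρ₂) := by
    rw [div_lt_iff₀ hρ] at hγ; linarith
  have hγ0 : 0 < γ := lt_trans (div_pos one_pos hρ) hγ
  refine ⟨2, by norm_num, γ * (1 - ρ₂) - 1, by linarith, ?_⟩
  intro n d y hnorm hinner i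
  have hn : 0 < n := i.pos
  have hn' : (0:ℝ) < n := by exact_mod_cast hn
  have hn1 : (1:ℝ) ≤ n := by exact_mod_cast hn
  have hlog : 0 ≤ Real.log n := Real.log_nonneg hn1
  set β := γ * Real.log n with hβdef
  have hβ : 0 ≤ β := mul_nonneg hγ0.le hlog
  set w : Fin n → ℝ := fun j => Real.exp (β * ⟪y i, y j⟫) with hw
  set Z : ℝ := ∑ k, w k with hZdef
  have hwpos : ∀ j, 0 < w j := fun j => Real.exp_pos _
  have hself : ⟪y i, y i⟫ = 1 := by
    have h := real_inner_self_eq_norm_sq (y i)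
    rw [hnorm i] at h; simpa using h
  have hZge : Real.exp β ≤ Z := by
    have : Real.exp β = w i := by rw [hw]; simp [hself, hnorm i]
    rw [this]
    exact Finset.single_le_sum (fun j _ => (hwpos j).le) (Finset.mem_univ i)
  have hZpos : 0 < Z := lt_of_lt_of_le (Real.exp_pos β) hZge
  have key : (∑ k, Real.exp (β * ⟪y i, y k⟫))⁻¹ •
      (∑ j, Real.exp (β * ⟪y i, y j⟫) • y j) - y i
      = Z⁻¹ • (∑ j, w j • (y j - y i)) := by
    have h1 : (∑ j, w j • (y j - y i)) = (∑ j, w j • y j) - Z • y i := by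
      rw [hZdef, Finset.sum_smul]
      rw [← Finset.sum_sub_distrib]
      congr 1; ext j; rw [smul_sub]
    rw [h1, smul_sub, inv_smul_smul₀ hZpos.ne']
  rw [key]
  have hnormS : ‖∑ j, w j • (y j - y i)‖ ≤ n * (2 * Real.exp (β * ρ₂)) := by
    calc ‖∑ j, w j • (y j - y i)‖ ≤ ∑ j, ‖w j • (y j - y i)‖ := norm_sum_le _ _
    _ ≤ ∑ _j : Fin n, 2 * Real.exp (β * ρ₂) := by
        apply Finset.sum_le_sum
        intro j _
        rw [norm_smul, Real.norm_eq_abs, abs_of_pos (hwpos j)]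
        by_cases hji : j = i
        · subst hji; simp; positivity
        · have h2 : ⟪y i, y j⟫ ≤ ρ₂ := (hinner i j (Ne.symm hji)).2
          have hw2 : w j ≤ Real.exp (β * ρ₂) :=
            Real.exp_le_exp.mpr (mul_le_mul_of_nonneg_left h2 hβ)
          have hny : ‖y j - y i‖ ≤ 2 := by
            calc ‖y j - y i‖ ≤ ‖y j‖ + ‖y i‖ := norm_sub_le _ _
            _ = 2 := by rw [hnorm, hnorm]; norm_num
          calc w j * ‖y j - y i‖ ≤ Real.exp (β * ρ₂) * 2 :=
                mul_le_mul hw2 hny (norm_nonneg _) (Real.exp_pos _).le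
          _ = 2 * Real.exp (β * ρ₂) := by ring
    _ = n * (2 * Real.exp (β * ρ₂)) := by
        rw [Finset.sum_const, Finset.card_univ, Fintype.card_fin, nsmul_eq_mul]
  calc ‖Z⁻¹ • (∑ j, w j • (y j - y i))‖ = Z⁻¹ * ‖∑ j, w j • (y j - y i)‖ := by
        rw [norm_smul, Real.norm_eq_abs, abs_of_pos (inv_pos.mpr hZpos)]
  _ ≤ (Real.exp β)⁻¹ * (n * (2 * Real.exp (β * ρ₂))) :=
      mul_le_mul (inv_anti₀ (Real.exp_pos β) hZge) hnormS (norm_nonneg _)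
        (by positivity)
  _ = 2 * (n : ℝ) ^ (-(γ * (1 - ρ₂) - 1)) := by
      have he : Real.log ((n:ℝ)) * -(γ * (1 - ρ₂) - 1) = -β + (Real.log n + β * ρ₂) := by
        rw [hβdef]; ring
      rw [Real.rpow_def_of_pos hn', he, Real.exp_add, Real.exp_add, Real.exp_neg,
          Real.exp_log hn']
      ring
end

section
/- Let $0 < \rho_1 \le \rho_2 < 1$, $0 < q_1 \le q_2$, $\alpha \ge 0$, and $0 < \gamma < \frac{1}{1-\rho_1}$. There exists $\varepsilon > 0$ depending only on $\alpha,\rho_2,q_1,q_2$ such that: for each $n$, if $x_1,\dots,x_n \in \mathbb{R}^d$ satisfy $q_1 \le \|x_i\|^2 \le q_2$ and $\rho_1 \le \langle y_i,y_j\rangle \le \rho_2$ for $i \ne j$ (with $y_i = x_i/\|x_i\|$), and $x_i' = \alpha x_i + \mathsf{ATT}(y_i)$ where $\mathsf{ATT}(y_i) = (\sum_k e^{\beta\langle y_i,y_k\rangle})^{-1}\sum_j e^{\beta\langle y_i,y_j\rangle}y_j$ with $\beta = \gamma\log n$, then $\liminf_{n\to\infty}\min_{i\ne j}\langle x_i'/\|x_i'\|,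 x_j'/\|x_j'\|\rangle \ge \rho_1 + \varepsilon$. -/
open scoped RealInnerProductSpace BigOperators


private lemma sum_low {N : ℕ} (ρ : ℝ) (e g : Fin N → ℝ) (he : ∀ m, 0 ≤ e m)
    (hg : ∀ m, ρ ≤ g m) : ρ * ∑ m, e m ≤ ∑ m, e m * g m := by
  rw [Finset.mul_sum]
  refine Finset.sum_le_sum fun m _ => ?_
  calc ρ * e m = e m * ρ := mul_comm _ _
    _ ≤ e m * g m := mul_le_mul_of_nonneg_left (hg m) (he m)

private lemma sum_up_const {N : ℕ} (C : ℝ) (e g : Fin N → ℝ) (he : ∀ m, 0 ≤ e m)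
    (hg : ∀ m, g m ≤ C) : ∑ m, e m * g m ≤ C * ∑ m, e m := by
  rw [Finset.mul_sum]
  refine Finset.sum_le_sum fun m _ => ?_
  calc e m * g m ≤ e m * C := mul_le_mul_of_nonneg_left (hg m) (he m)
    _ = C * e m := mul_comm _ _

private lemma sum_up {N : ℕ} (ρ : ℝ) (e g : Fin N → ℝ) (he : ∀ m, 0 ≤ e m)
    (i : Fin N) (hg : ∀ m, m ≠ i → g m ≤ ρ) (hgi : g i ≤ 1) :
    ∑ m, e m * g m ≤ ρ * ∑ m, e m + e i * (1 - ρ) := by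
  have h : ∀ m ∈ Finset.univ, e m * g m ≤ ρ * e m + (if m = i then e i * (1 - ρ) else 0) := by
    intro m _
    by_cases hm : m = i
    · subst hm
      simp only [if_pos]
      nlinarith [he m, hgi]
    · simp only [if_neg hm, add_zero]
      nlinarith [he m, hg m hm]
  calc ∑ m, e m * g m ≤ ∑ m, (ρ * e m + if m = i then e i * (1 - ρ) else 0) :=
        Finset.sum_le_sum h
    _ = ρ * ∑ m, e m + e i * (1 - ρ) := by
        rw [Finset.sum_add_distrib, ← Finset.mul_sum, Finset.sum_ite_eq' Finset.univ i,
          if_pos (Finset.mem_univ i)]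

section core
variable {E : Type*} [NormedAddCommGroup E] [InnerProductSpace ℝ E] {N : ℕ}
  (ρ₁ ρ₂ δ : ℝ) (y : Fin N → E) (e : Fin N → Fin N → ℝ) (a : Fin N → ℝ)

-- expansion lemmas
private lemma inner_right_sum (v : E) (k : Fin N) :
    ⟪v, ∑ m, e k m • y m⟫ = ∑ m, e k m * ⟪v, y m⟫ := by
  rw [inner_sum]
  exact Finset.sum_congr rfl fun m _ => real_inner_smul_right _ _ _

private lemma core_low (h1 : 0 < ρ₁)
    (hg1 : ∀ k l, ρ₁ ≤ ⟪y k, y l⟫)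
    (he0 : ∀ k l, 0 ≤ e k l) (heZ : ∀ k, 0 < ∑ m, e k m)
    (ha : ∀ k, 0 ≤ a k) (i j : Fin N) :
    ρ₁ * ((a i + 1) * (a j + 1)) ≤
      ⟪a i • y i + (∑ m, e i m)⁻¹ • ∑ m, e i m • y m,
       a j • y j + (∑ m, e j m)⁻¹ • ∑ m, e j m • y m⟫ := by
  set Zi := ∑ m, e i m with hZi
  set Zj := ∑ m, e j m with hZj
  set Si := ∑ m, e i m • y m with hSi
  set Sj := ∑ m, e j m • y m with hSj
  have hZi0 : 0 < Zi := heZ i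
  have hZj0 : 0 < Zj := heZ j
  have expand : ⟪a i • y i + Zi⁻¹ • Si, a j • y j + Zj⁻¹ • Sj⟫
      = a i * (a j * ⟪y i, y j⟫) + a i * (Zj⁻¹ * ⟪y i, Sj⟫)
        + Zi⁻¹ * (a j * ⟪Si, y j⟫) + Zi⁻¹ * (Zj⁻¹ * ⟪Si, Sj⟫) := by
    rw [inner_add_left, inner_add_right, inner_add_right, real_inner_smul_left,
      real_inner_smul_left, real_inner_smul_right, real_inner_smul_right,
      real_inner_smul_left, real_inner_smul_right, real_inner_smul_left,
      real_inner_smul_right]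
    ring
  rw [expand]
  -- bounds for each term
  have hySj : ∀ v : Fin N, ρ₁ * Zj ≤ ⟪y v, Sj⟫ := by
    intro v
    rw [hSj, inner_right_sum]
    exact sum_low ρ₁ (e j) _ (fun m => he0 j m) (fun m => hg1 v m)
  have hSiyj : ρ₁ * Zi ≤ ⟪Si, y j⟫ := by
    rw [real_inner_comm, hSi, inner_right_sum]
    exact sum_low ρ₁ (e i) _ (fun m => he0 i m) (fun m => hg1 j m)
  have hSiSj : (ρ₁ * Zj) * Zi ≤ ⟪Si, Sj⟫ := by
    rw [hSi, sum_inner]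
    have : ∀ m, ⟪e i m • y m, Sj⟫ = e i m * ⟪y m, Sj⟫ :=
      fun m => real_inner_smul_left _ _ _
    rw [Finset.sum_congr rfl fun m _ => this m]
    exact sum_low (ρ₁ * Zj) (e i) _ (fun m => he0 i m) (fun m => hySj m)
  -- now combine
  have t1 : ρ₁ * (a i * a j) ≤ a i * (a j * ⟪y i, y j⟫) := by
    nlinarith [hg1 i j, mul_nonneg (ha i) (ha j)]
  have t2 : ρ₁ * a i ≤ a i * (Zj⁻¹ * ⟪y i, Sj⟫) := by
    have h := mul_le_mul_of_nonneg_left (hySj i) (le_of_lt (inv_pos.mpr hZj0))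
    have heq : Zj⁻¹ * (ρ₁ * Zj) = ρ₁ := by field_simp
    rw [heq] at h
    nlinarith [ha i]
  have t3 : ρ₁ * a j ≤ Zi⁻¹ * (a j * ⟪Si, y j⟫) := by
    have h := mul_le_mul_of_nonneg_left hSiyj (le_of_lt (inv_pos.mpr hZi0))
    have heq : Zi⁻¹ * (ρ₁ * Zi) = ρ₁ := by field_simp
    rw [heq] at h
    nlinarith [ha j, le_of_lt (inv_pos.mpr hZi0)]
  have t4 : ρ₁ ≤ Zi⁻¹ * (Zj⁻¹ * ⟪Si, Sj⟫) := by
    have h := mul_le_mul_of_nonneg_left (mul_le_mul_of_nonneg_left hSiSj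
      (le_of_lt (inv_pos.mpr hZj0))) (le_of_lt (inv_pos.mpr hZi0))
    have heq : Zi⁻¹ * (Zj⁻¹ * (ρ₁ * Zj * Zi)) = ρ₁ := by field_simp
    rw [heq] at h
    exact h
  nlinarith [t1, t2, t3, t4]

private lemma core_up (h1 : 0 < ρ₁) (h12 : ρ₁ ≤ ρ₂) (h2 : ρ₂ < 1) (hδ0 : 0 ≤ δ)
    (hy : ∀ k, ‖y k‖ = 1)
    (hup : ∀ k l, k ≠ l → ⟪y k, y l⟫ ≤ ρ₂)
    (he0 : ∀ k l, 0 ≤ e k l) (heZ : ∀ k, 0 < ∑ m, e k m)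
    (heδ : ∀ k l, e k l ≤ δ * ∑ m, e k m)
    (a : Fin N → ℝ) (ha : ∀ k, 0 ≤ a k) (k : Fin N) :
    ⟪a k • y k + (∑ m, e k m)⁻¹ • ∑ m, e k m • y m,
     a k • y k + (∑ m, e k m)⁻¹ • ∑ m, e k m • y m⟫
      ≤ a k ^ 2 + 2 * a k * (ρ₂ + δ) + (ρ₂ + δ) := by
  set Z := ∑ m, e k m with hZ
  set S := ∑ m, e k m • y m with hS
  have hZ0 : 0 < Z := heZ k
  have hgd : ⟪y k, y k⟫ = 1 := by
    rw [real_inner_self_eq_norm_sq, hy k]; norm_num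
  have hg1' : ∀ l m : Fin N, ⟪y l, y m⟫ ≤ 1 := by
    intro l m
    have := real_inner_le_norm (y l) (y m)
    rwa [hy l, hy m, one_mul] at this
  have hyS : ∀ l : Fin N, ⟪y l, S⟫ ≤ (ρ₂ + δ) * Z := by
    intro l
    rw [hS, inner_right_sum]
    have h := sum_up ρ₂ (e k) (fun m => ⟪y l, y m⟫) (fun m => he0 k m) l
      (fun m hm => hup l m (fun h => hm h.symm)) (hg1' l l)
    have h2' : e k l * (1 - ρ₂) ≤ δ * Z := by
      nlinarith [heδ k l, he0 k l, mul_nonneg hδ0 (le_of_lt hZ0)]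
    nlinarith [h, h2']
  have expand : ⟪a k • y k + Z⁻¹ • S, a k • y k + Z⁻¹ • S⟫
      = a k * (a k * ⟪y k, y k⟫) + a k * (Z⁻¹ * ⟪y k, S⟫)
        + Z⁻¹ * (a k * ⟪S, y k⟫) + Z⁻¹ * (Z⁻¹ * ⟪S, S⟫) := by
    rw [inner_add_left, inner_add_right, inner_add_right, real_inner_smul_left,
      real_inner_smul_left, real_inner_smul_right, real_inner_smul_right,
      real_inner_smul_left, real_inner_smul_right, real_inner_smul_left,
      real_inner_smul_right]
    ring
  rw [expand, hgd]
  have hSyk : ⟪S, y k⟫ ≤ (ρ₂ + δ) * Z := by rw [real_inner_comm]; exact hyS k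
  have hSS : ⟪S, S⟫ ≤ ((ρ₂ + δ) * Z) * Z := by
    rw [hS, sum_inner]
    have : ∀ m, ⟪e k m • y m, S⟫ = e k m * ⟪y m, S⟫ :=
      fun m => real_inner_smul_left _ _ _
    rw [Finset.sum_congr rfl fun m _ => this m]
    exact sum_up_const ((ρ₂ + δ) * Z) (e k) _ (fun m => he0 k m) (fun m => hyS m)
  have hZinv : (0:ℝ) ≤ Z⁻¹ := le_of_lt (inv_pos.mpr hZ0)
  have t2 : Z⁻¹ * ⟪y k, S⟫ ≤ ρ₂ + δ := by
    have h := mul_le_mul_of_nonneg_left (hyS k) hZinv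
    have heq : Z⁻¹ * ((ρ₂ + δ) * Z) = ρ₂ + δ := by field_simp
    rw [heq] at h; exact h
  have t3 : Z⁻¹ * ⟪S, y k⟫ ≤ ρ₂ + δ := by
    have h := mul_le_mul_of_nonneg_left hSyk hZinv
    have heq : Z⁻¹ * ((ρ₂ + δ) * Z) = ρ₂ + δ := by field_simp
    rw [heq] at h; exact h
  have t4 : Z⁻¹ * (Z⁻¹ * ⟪S, S⟫) ≤ ρ₂ + δ := by
    have h := mul_le_mul_of_nonneg_left (mul_le_mul_of_nonneg_left hSS hZinv) hZinv
    have heq : Z⁻¹ * (Z⁻¹ * ((ρ₂ + δ) * Z * Z)) = ρ₂ + δ := by field_simp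
    rw [heq] at h; exact h
  nlinarith [t2, t3, t4, ha k]


private lemma final {E : Type*} [NormedAddCommGroup E] [InnerProductSpace ℝ E]
    (ρ₁ τ ai aj : ℝ) (u v : E) (hρ : 0 < ρ₁) (hτ0 : 0 < τ) (hτ1 : τ < 1)
    (hai : 0 ≤ ai) (haj : 0 ≤ aj)
    (hlow : ρ₁ * ((ai + 1) * (aj + 1)) ≤ ⟪u, v⟫)
    (hu2 : ‖u‖ ^ 2 ≤ (ai + 1) ^ 2 * (1 - τ)) (hv2 : ‖v‖ ^ 2 ≤ (aj + 1) ^ 2 * (1 - τ))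
    (hu0 : 0 < ‖u‖) (hv0 : 0 < ‖v‖) :
    ρ₁ + ρ₁ * τ ≤ ⟪u, v⟫ / (‖u‖ * ‖v‖) := by
  rw [le_div_iff₀ (by positivity)]
  have h0 : (0:ℝ) ≤ 1 - τ := by linarith
  have key : ∀ (w : E) (b : ℝ), 0 ≤ b → ‖w‖ ^ 2 ≤ (b + 1) ^ 2 * (1 - τ) →
      ‖w‖ ≤ (b + 1) * Real.sqrt (1 - τ) := by
    intro w b hb h
    calc ‖w‖ = Real.sqrt (‖w‖ ^ 2) := (Real.sqrt_sq (norm_nonneg w)).symm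
      _ ≤ Real.sqrt ((b + 1) ^ 2 * (1 - τ)) := Real.sqrt_le_sqrt h
      _ = (b + 1) * Real.sqrt (1 - τ) := by
          rw [Real.sqrt_mul (by positivity), Real.sqrt_sq (by linarith)]
  have hu' := key u ai hai hu2
  have hv' := key v aj haj hv2
  have hs : Real.sqrt (1 - τ) ^ 2 = 1 - τ := Real.sq_sqrt h0
  have hmul : ‖u‖ * ‖v‖ ≤ ((ai + 1) * Real.sqrt (1 - τ)) * ((aj + 1) * Real.sqrt (1 - τ)) :=
    mul_le_mul hu' hv' (norm_nonneg v) (by positivity)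
  have heq2 : ((ai + 1) * Real.sqrt (1 - τ)) * ((aj + 1) * Real.sqrt (1 - τ))
      = (ai + 1) * (aj + 1) * (1 - τ) := by linear_combination ((ai + 1) * (aj + 1)) * hs
  have hmul2 : ‖u‖ * ‖v‖ ≤ (ai + 1) * (aj + 1) * (1 - τ) := by rw [← heq2]; exact hmul
  have hcoef : (ρ₁ + ρ₁ * τ) * (1 - τ) ≤ ρ₁ := by nlinarith [sq_nonneg τ]
  calc (ρ₁ + ρ₁ * τ) * (‖u‖ * ‖v‖) ≤ (ρ₁ + ρ₁ * τ) * ((ai + 1) * (aj + 1) * (1 - τ)) := by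
        apply mul_le_mul_of_nonneg_left hmul2 (by positivity)
    _ = ((ρ₁ + ρ₁ * τ) * (1 - τ)) * ((ai + 1) * (aj + 1)) := by ring
    _ ≤ ρ₁ * ((ai + 1) * (aj + 1)) := by
        apply mul_le_mul_of_nonneg_right hcoef (by positivity)
    _ ≤ ⟪u, v⟫ := hlow

private lemma arith_step (ρ₂ τ δ A t : ℝ) (h2 : ρ₂ < 1) (hδ0 : 0 ≤ δ) (hδρ : δ ≤ (1 - ρ₂) / 2)
    (hA0 : 0 ≤ A) (ht0 : 0 ≤ t) (htA : t ≤ A)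
    (hτdef : τ * ((A + 1) ^ 2 * 2) = (2 * A + 1) * (1 - ρ₂)) :
    t ^ 2 + 2 * t * (ρ₂ + δ) + (ρ₂ + δ) ≤ (t + 1) ^ 2 * (1 - τ) := by
  have h0 : (0:ℝ) ≤ 2 * t * A + A + t := by positivity
  have hpoly : (2 * A + 1) * (t + 1) ^ 2 ≤ (2 * t + 1) * (A + 1) ^ 2 := by
    nlinarith [mul_nonneg (sub_nonneg.mpr htA) h0]
  have hApos : (0:ℝ) < (A + 1) ^ 2 * 2 := by positivity
  have hstep : τ * (t + 1) ^ 2 ≤ (2 * t + 1) * ((1 - ρ₂) / 2) := by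
    nlinarith [mul_le_mul_of_nonneg_right hpoly (show (0:ℝ) ≤ (1 - ρ₂) / 2 by linarith),
      hτdef, hApos]
  have hmono : (2 * t + 1) * ((1 - ρ₂) / 2) ≤ (2 * t + 1) * (1 - ρ₂ - δ) :=
    mul_le_mul_of_nonneg_left (by linarith) (by linarith)
  nlinarith [hstep, hmono]

private lemma main_pair {E : Type*} [NormedAddCommGroup E] [InnerProductSpace ℝ E]
    {n : ℕ} (ρ₁ ρ₂ τ δ β A : ℝ)
    (y X : Fin (n + 2) → E) (a : Fin (n + 2) → ℝ)
    (h1 : 0 < ρ₁) (h12 : ρ₁ ≤ ρ₂) (h2 : ρ₂ < 1)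
    (hτ0 : 0 < τ) (hτ1 : τ < 1)
    (hδ0 : 0 ≤ δ) (hδρ : δ ≤ (1 - ρ₂) / 2)
    (hA0 : 0 ≤ A) (hτdef : τ * ((A + 1) ^ 2 * 2) = (2 * A + 1) * (1 - ρ₂))
    (hy : ∀ k, ‖y k‖ = 1)
    (ha0 : ∀ k, 0 ≤ a k) (haA : ∀ k, a k ≤ A)
    (hglow : ∀ k l, k ≠ l → ρ₁ ≤ ⟪y k, y l⟫)
    (hgup : ∀ k l, k ≠ l → ⟪y k, y l⟫ ≤ ρ₂)
    (heδ : ∀ k l, Real.exp (β * ⟪y k, y l⟫) ≤ δ * ∑ m, Real.exp (β * ⟪y k, y m⟫))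
    (hX : ∀ k, X k = a k • y k +
      (∑ l, Real.exp (β * ⟪y k, y l⟫))⁻¹ • ∑ m, Real.exp (β * ⟪y k, y m⟫) • y m)
    (p₁ p₂ : Fin (n + 2)) (hp : p₁ ≠ p₂) :
    ρ₁ + ρ₁ * τ ≤ ⟪X p₁, X p₂⟫ / (‖X p₁‖ * ‖X p₂‖) := by
  have he0 : ∀ k l : Fin (n + 2), (0:ℝ) ≤ Real.exp (β * ⟪y k, y l⟫) :=
    fun k l => (Real.exp_pos _).le
  have heZ : ∀ k : Fin (n + 2), (0:ℝ) < ∑ m, Real.exp (β * ⟪y k, y m⟫) :=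
    fun k => Finset.sum_pos (fun m _ => Real.exp_pos _) Finset.univ_nonempty
  have hg1 : ∀ k l, ρ₁ ≤ ⟪y k, y l⟫ := by
    intro k l
    by_cases hkl : k = l
    · subst hkl
      rw [real_inner_self_eq_norm_sq, hy k]
      norm_num
      linarith
    · exact hglow k l hkl
  have hlow := core_low ρ₁ y (fun k l => Real.exp (β * ⟪y k, y l⟫)) a h1 hg1 he0 heZ ha0 p₁ p₂
  have hup := fun k => core_up ρ₁ ρ₂ δ y (fun k l => Real.exp (β * ⟪y k, y l⟫))
    h1 h12 h2 hδ0 hy hgup he0 heZ heδ a ha0 k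
  have hlowd := fun k => core_low ρ₁ y (fun k l => Real.exp (β * ⟪y k, y l⟫)) a
    h1 hg1 he0 heZ ha0 k k
  have hnorm2 : ∀ k, ‖X k‖ ^ 2 ≤ (a k + 1) ^ 2 * (1 - τ) := by
    intro k
    have h := hup k
    rw [← hX k] at h
    rw [← real_inner_self_eq_norm_sq]
    exact le_trans h (arith_step ρ₂ τ δ A (a k) h2 hδ0 hδρ hA0 (ha0 k) (haA k) hτdef)
  have hpos : ∀ k, 0 < ‖X k‖ := by
    intro k
    have h := hlowd k
    rw [← hX k, real_inner_self_eq_norm_sq] at h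
    have h2' : (0:ℝ) < ρ₁ * ((a k + 1) * (a k + 1)) := by
      have := ha0 k; positivity
    nlinarith [norm_nonneg (X k)]
  have hlow' : ρ₁ * ((a p₁ + 1) * (a p₂ + 1)) ≤ ⟪X p₁, X p₂⟫ := by
    rw [hX p₁, hX p₂]; exact hlow
  exact final ρ₁ τ (a p₁) (a p₂) (X p₁) (X p₂) h1 hτ0 hτ1 (ha0 p₁) (ha0 p₂) hlow'
    (hnorm2 p₁) (hnorm2 p₂) (hpos p₁) (hpos p₂)

theorem stmt12 (ρ₁ ρ₂ q₁ q₂ α γ : ℝ)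
    (h1 : 0 < ρ₁) (h12 : ρ₁ ≤ ρ₂) (h2 : ρ₂ < 1)
    (hq1 : 0 < q₁) (hq12 : q₁ ≤ q₂) (hα : 0 ≤ α)
    (hγ0 : 0 < γ) (hγ : γ < 1 / (1 - ρ₁)) :
    ∃ ε > (0:ℝ),
      ∀ (d : ℕ → ℕ) (x : (n : ℕ) → Fin (n + 2) → EuclideanSpace ℝ (Fin (d n))),
        (∀ n i, q₁ ≤ ‖x n i‖ ^ 2 ∧ ‖x n i‖ ^ 2 ≤ q₂) →
        (∀ n, ∀ i j : Fin (n + 2), i ≠ j →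
          ρ₁ ≤ ⟪(‖x n i‖⁻¹ • x n i : EuclideanSpace ℝ (Fin (d n))), ‖x n j‖⁻¹ • x n j⟫ ∧
          ⟪(‖x n i‖⁻¹ • x n i : EuclideanSpace ℝ (Fin (d n))), ‖x n j‖⁻¹ • x n j⟫ ≤ ρ₂) →
        ρ₁ + ε ≤ Filter.liminf (fun n : ℕ =>
          Finset.inf' (Finset.univ.offDiag : Finset (Fin (n + 2) × Fin (n + 2)))
            ⟨(0, 1), Finset.mem_offDiag.mpr
              ⟨Finset.mem_univ _, Finset.mem_univ _, by simp⟩⟩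
            (fun p =>
              let β : ℝ := γ * Real.log (n + 2)
              let y : Fin (n + 2) → EuclideanSpace ℝ (Fin (d n)) :=
                fun k => ‖x n k‖⁻¹ • x n k
              let x' : Fin (n + 2) → EuclideanSpace ℝ (Fin (d n)) := fun k =>
                α • x n k + (∑ l, Real.exp (β * ⟪y k, y l⟫))⁻¹ •
                  (∑ m, Real.exp (β * ⟪y k, y m⟫) • y m)
              ⟪x' p.1, x' p.2⟫ / (‖x' p.1‖ * ‖x' p.2‖))) Filter.atTop := by
  have hρ2pos : 0 < ρ₂ := lt_of_lt_of_le h1 h12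
  have h1ρ2 : 0 < 1 - ρ₂ := by linarith
  set A := α * Real.sqrt q₂ with hA
  have hA0 : 0 ≤ A := mul_nonneg hα (Real.sqrt_nonneg _)
  set c := (2 * A + 1) / ((A + 1) ^ 2) with hc
  have hc0 : 0 < c := by positivity
  have hc1 : c ≤ 1 := by
    rw [hc, div_le_one (by positivity)]
    nlinarith [sq_nonneg A]
  set τ := c * (1 - ρ₂) / 2 with hτ
  have hτ0 : 0 < τ := by positivity
  have hτ1 : τ < 1 := by
    have : c * (1 - ρ₂) ≤ 1 * 1 := mul_le_mul hc1 (by linarith) (by linarith) (by norm_num)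
    rw [hτ]; linarith
  have hτdef : τ * ((A + 1) ^ 2 * 2) = (2 * A + 1) * (1 - ρ₂) := by
    rw [hτ, hc]; field_simp
  refine ⟨ρ₁ * τ, mul_pos h1 hτ0, ?_⟩
  intro d x hq hg
  have hρ1lt : 0 < 1 - ρ₁ := by linarith
  have hγρ : γ * (1 - ρ₁) < 1 := by
    have := (lt_div_iff₀ hρ1lt).mp hγ
    linarith
  -- the weight-bound sequence
  have hδto : Filter.Tendsto (fun n : ℕ => ((n:ℝ) + 2) ^ (γ * (1 - ρ₁) - 1))
      Filter.atTop (nhds 0) := by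
    have h := tendsto_rpow_neg_atTop (show (0:ℝ) < -(γ * (1 - ρ₁) - 1) by linarith)
    have h2' : Filter.Tendsto (fun n : ℕ => (n:ℝ) + 2) Filter.atTop Filter.atTop :=
      Filter.tendsto_atTop_add_const_right _ 2 tendsto_natCast_atTop_atTop
    have := h.comp h2'
    simpa [Function.comp_def] using this
  have hev : ∀ᶠ n : ℕ in Filter.atTop,
      ((n:ℝ) + 2) ^ (γ * (1 - ρ₁) - 1) ≤ (1 - ρ₂) / 2 :=
    (hδto.eventually (gt_mem_nhds (show (0:ℝ) < (1 - ρ₂) / 2 by linarith))).mono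
      fun n h => le_of_lt h
  -- nonvanishing of x
  have hx0 : ∀ n k, x n k ≠ 0 := by
    intro n k h
    have := (hq n k).1
    rw [h] at this
    simp at this
    linarith
  apply Filter.le_liminf_of_le
  · -- coboundedness: the sequence is bounded above by 1
    apply Filter.IsBoundedUnder.isCoboundedUnder_ge
    refine Filter.isBoundedUnder_of ⟨1, fun n => ?_⟩
    have hmem : ((0 : Fin (n + 2)), (1 : Fin (n + 2))) ∈
        (Finset.univ.offDiag : Finset (Fin (n + 2) × Fin (n + 2))) :=
      Finset.mem_offDiag.mpr ⟨Finset.mem_univ _, Finset.mem_univ _, by simp⟩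
    refine le_trans (Finset.inf'_le _ hmem) ?_
    exact div_le_one_of_le₀ (real_inner_le_norm _ _) (by positivity)
  · filter_upwards [hev] with n hδn
    refine Finset.le_inf' _ _ ?_
    intro p hp
    have hpne : p.1 ≠ p.2 := (Finset.mem_offDiag.mp hp).2.2
    dsimp only
    set β : ℝ := γ * Real.log ((n:ℝ) + 2) with hβ
    set δ : ℝ := ((n:ℝ) + 2) ^ (γ * (1 - ρ₁) - 1) with hδ
    have hδ0 : 0 ≤ δ := Real.rpow_nonneg (by positivity) _
    have hn2 : (0:ℝ) < (n:ℝ) + 2 := by positivity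
    have hL0 : 0 ≤ Real.log ((n:ℝ) + 2) := Real.log_nonneg
      (by have := Nat.cast_nonneg (α := ℝ) n; linarith)
    have hβ0 : 0 ≤ β := mul_nonneg hγ0.le hL0
    -- the unit vectors
    have hy : ∀ k : Fin (n + 2),
        ‖(‖x n k‖⁻¹ • x n k : EuclideanSpace ℝ (Fin (d n)))‖ = 1 :=
      fun k => norm_smul_inv_norm (hx0 n k)
    have hg1 : ∀ k l : Fin (n + 2),
        ρ₁ ≤ ⟪(‖x n k‖⁻¹ • x n k : EuclideanSpace ℝ (Fin (d n))), ‖x n l‖⁻¹ • x n l⟫ := by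
      intro k l
      by_cases hkl : k = l
      · subst hkl
        rw [real_inner_self_eq_norm_sq, hy k]
        norm_num
        linarith
      · exact (hg n k l hkl).1
    have hgle1 : ∀ k l : Fin (n + 2),
        ⟪(‖x n k‖⁻¹ • x n k : EuclideanSpace ℝ (Fin (d n))), ‖x n l‖⁻¹ • x n l⟫ ≤ 1 := by
      intro k l
      have := real_inner_le_norm
        ((‖x n k‖⁻¹ • x n k : EuclideanSpace ℝ (Fin (d n)))) (‖x n l‖⁻¹ • x n l)
      rwa [hy k, hy l, one_mul] at this
    -- weight bound
    have heδ : ∀ k l : Fin (n + 2),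
        Real.exp (β * ⟪(‖x n k‖⁻¹ • x n k : EuclideanSpace ℝ (Fin (d n))), ‖x n l‖⁻¹ • x n l⟫)
          ≤ δ * ∑ m, Real.exp (β * ⟪(‖x n k‖⁻¹ • x n k : EuclideanSpace ℝ (Fin (d n))),
              ‖x n m‖⁻¹ • x n m⟫) := by
      intro k l
      have step1 : Real.exp (β * ⟪(‖x n k‖⁻¹ • x n k : EuclideanSpace ℝ (Fin (d n))),
          ‖x n l‖⁻¹ • x n l⟫) ≤ Real.exp β := by
        apply Real.exp_le_exp.mpr
        nlinarith [hgle1 k l, hβ0]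
      have step2 : ((n:ℝ) + 2) * Real.exp (β * ρ₁) ≤ ∑ m, Real.exp
          (β * ⟪(‖x n k‖⁻¹ • x n k : EuclideanSpace ℝ (Fin (d n))), ‖x n m‖⁻¹ • x n m⟫) := by
        have hterm : ∀ m : Fin (n + 2), Real.exp (β * ρ₁) ≤ Real.exp
            (β * ⟪(‖x n k‖⁻¹ • x n k : EuclideanSpace ℝ (Fin (d n))), ‖x n m‖⁻¹ • x n m⟫) :=
          fun m => Real.exp_le_exp.mpr (mul_le_mul_of_nonneg_left (hg1 k m) hβ0)
        calc ((n:ℝ) + 2) * Real.exp (β * ρ₁)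
            = ∑ _m : Fin (n + 2), Real.exp (β * ρ₁) := by
              rw [Finset.sum_const, Finset.card_univ, Fintype.card_fin, nsmul_eq_mul]
              push_cast
              ring
          _ ≤ _ := Finset.sum_le_sum fun m _ => hterm m
      have hkey : Real.exp β = δ * (((n:ℝ) + 2) * Real.exp (β * ρ₁)) := by
        rw [hδ, hβ, Real.rpow_def_of_pos hn2]
        nth_rewrite 3 [show (n:ℝ) + 2 = Real.exp (Real.log ((n:ℝ) + 2)) from
          (Real.exp_log hn2).symm]
        rw [← Real.exp_add, ← Real.exp_add]
        congr 1
        ring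
      calc Real.exp (β * ⟪(‖x n k‖⁻¹ • x n k : EuclideanSpace ℝ (Fin (d n))),
              ‖x n l‖⁻¹ • x n l⟫) ≤ Real.exp β := step1
        _ = δ * (((n:ℝ) + 2) * Real.exp (β * ρ₁)) := hkey
        _ ≤ δ * ∑ m, Real.exp (β * ⟪(‖x n k‖⁻¹ • x n k : EuclideanSpace ℝ (Fin (d n))),
              ‖x n m‖⁻¹ • x n m⟫) := mul_le_mul_of_nonneg_left step2 hδ0
    -- residual coefficients
    have hnormne : ∀ k, ‖x n k‖ ≠ 0 := fun k => norm_ne_zero_iff.mpr (hx0 n k)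
    have ha0 : ∀ k : Fin (n + 2), 0 ≤ α * ‖x n k‖ :=
      fun k => mul_nonneg hα (norm_nonneg _)
    have haA : ∀ k : Fin (n + 2), α * ‖x n k‖ ≤ A := by
      intro k
      apply mul_le_mul_of_nonneg_left _ hα
      exact (Real.le_sqrt (norm_nonneg _) (le_trans hq1.le hq12)).mpr (hq n k).2
    have hX : ∀ k : Fin (n + 2),
        (α • x n k + (∑ l, Real.exp (β * ⟪(‖x n k‖⁻¹ • x n k : EuclideanSpace ℝ (Fin (d n))),
            ‖x n l‖⁻¹ • x n l⟫))⁻¹ •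
          (∑ m, Real.exp (β * ⟪(‖x n k‖⁻¹ • x n k : EuclideanSpace ℝ (Fin (d n))),
            ‖x n m‖⁻¹ • x n m⟫) • (‖x n m‖⁻¹ • x n m)) : EuclideanSpace ℝ (Fin (d n)))
          = (α * ‖x n k‖) • (‖x n k‖⁻¹ • x n k) +
            (∑ l, Real.exp (β * ⟪(‖x n k‖⁻¹ • x n k : EuclideanSpace ℝ (Fin (d n))),
              ‖x n l‖⁻¹ • x n l⟫))⁻¹ •
            (∑ m, Real.exp (β * ⟪(‖x n k‖⁻¹ • x n k : EuclideanSpace ℝ (Fin (d n))),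
              ‖x n m‖⁻¹ • x n m⟫) • (‖x n m‖⁻¹ • x n m)) := by
      intro k
      congr 1
      rw [smul_smul, mul_assoc, mul_inv_cancel₀ (hnormne k), mul_one]
    exact main_pair ρ₁ ρ₂ τ δ β A
      (fun k => ‖x n k‖⁻¹ • x n k)
      (fun k => α • x n k + (∑ l, Real.exp (β * ⟪(‖x n k‖⁻¹ • x n k :
          EuclideanSpace ℝ (Fin (d n))), ‖x n l‖⁻¹ • x n l⟫))⁻¹ •
        (∑ m, Real.exp (β * ⟪(‖x n k‖⁻¹ • x n k : EuclideanSpace ℝ (Fin (d n))),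
          ‖x n m‖⁻¹ • x n m⟫) • (‖x n m‖⁻¹ • x n m)))
      (fun k => α * ‖x n k‖)
      h1 h12 h2 hτ0 hτ1 hδ0 hδn hA0 hτdef hy ha0 haA
      (fun k l hkl => (hg n k l hkl).1) (fun k l hkl => (hg n k l hkl).2)
      heδ hX p.1 p.2 hpne
end core
end

section
/- Let $0 < \rho_1 \le \rho_2 < 1$ and fix $i$. Suppose $y_1,\dots,y_n$ are unit vectors with $\rho_1 \le \langle y_i, y_k\rangle \le \rho_2$ for $k \ne i$, let $\beta > 0$ and $Z_i = \sum_{k=1}^n e^{\beta\langle y_i, y_k\rangle}$. If $\beta = \gamma\log n$ with $\gamma > \frac{1}{1-\rho_2}$, then $\left|Z_i e^{-\beta} - 1\right| \le n^{\gamma\rho_2 + 1 - \gamma}$, and the exponent $\gamma\rho_2 + 1 - \gamma$ is negative. -/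
open scoped RealInnerProductSpace BigOperators

open Finset Real

/-- With the diagonal term normalised to `1`, the remainder is a sum of nonnegative off-diagonal
terms, each at most `exp (β * (ρ - 1))`. -/
theorem abs_sum_exp_mul_exp_neg_sub_one_le {ι : Type*} [Fintype ι] [DecidableEq ι]
    (s : ι → ℝ) (i : ι) {β ρ : ℝ} (hβ : 0 ≤ β) (hi : s i = 1) (hs : ∀ k, k ≠ i → s k ≤ ρ) :
    |(∑ k, exp (β * s k)) * exp (-β) - 1| ≤ ((Fintype.card ι : ℝ) - 1) * exp (β * (ρ - 1)) := by
  have hsplit :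
      (∑ k, exp (β * s k)) * exp (-β) - 1 = ∑ k ∈ univ.erase i, exp (β * (s k - 1)) := by
    rw [sum_mul, ← add_sum_erase _ _ (mem_univ i), hi, ← exp_add, mul_one, add_neg_cancel,
      exp_zero, add_sub_cancel_left]
    refine sum_congr rfl fun k _ => ?_
    rw [← exp_add]
    ring_nf
  have hterm : ∀ k ∈ univ.erase i, exp (β * (s k - 1)) ≤ exp (β * (ρ - 1)) := fun k hk =>
    exp_le_exp.mpr <| mul_le_mul_of_nonneg_left (by linarith [hs k (ne_of_mem_erase hk)]) hβ
  have hcard : ((univ.erase i).card : ℝ) = (Fintype.card ι : ℝ) - 1 := by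
    rw [card_erase_of_mem (mem_univ i), card_univ, Nat.cast_pred (Fintype.card_pos_iff.mpr ⟨i⟩)]
  rw [hsplit, abs_of_nonneg (sum_nonneg fun k _ => (exp_pos _).le), ← hcard, ← nsmul_eq_mul,
    ← sum_const]
  exact sum_le_sum hterm

theorem exponent_neg_of_one_div_one_sub_lt {ρ γ : ℝ} (hρ : ρ < 1) (hγ : 1 / (1 - ρ) < γ) :
    γ * ρ + 1 - γ < 0 := by
  rw [div_lt_iff₀ (sub_pos.mpr hρ)] at hγ
  linarith

theorem natCast_sub_one_mul_exp_log_le_rpow {n : ℕ} (hn : 0 < n) (γ ρ : ℝ) :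
    ((n : ℝ) - 1) * exp (γ * log n * (ρ - 1)) ≤ (n : ℝ) ^ (γ * ρ + 1 - γ) := by
  have hn' : (0 : ℝ) < n := by exact_mod_cast hn
  calc ((n : ℝ) - 1) * exp (γ * log n * (ρ - 1))
      ≤ n * (n : ℝ) ^ (γ * (ρ - 1)) := by
        rw [rpow_def_of_pos hn', mul_comm γ, mul_assoc]
        gcongr
        linarith
    _ = (n : ℝ) ^ (γ * ρ + 1 - γ) := by
        rw [show γ * ρ + 1 - γ = 1 + γ * (ρ - 1) by ring, rpow_add hn', rpow_one]

theorem stmt19_general (ρ₁ ρ₂ γ : ℝ) (h2 : ρ₂ < 1)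
    (hγ : 1 / (1 - ρ₂) < γ)
    (n d : ℕ) (y : Fin n → EuclideanSpace ℝ (Fin d)) (i : Fin n)
    (hunit : ∀ k, ‖y k‖ = 1)
    (hbound : ∀ k : Fin n, k ≠ i → ρ₁ ≤ ⟪y i, y k⟫ ∧ ⟪y i, y k⟫ ≤ ρ₂) :
    |(∑ k, Real.exp ((γ * Real.log n) * ⟪y i, y k⟫)) *
        Real.exp (-(γ * Real.log n)) - 1|
      ≤ (n : ℝ) ^ (γ * ρ₂ + 1 - γ) ∧ γ * ρ₂ + 1 - γ < 0 := by
  refine ⟨?_, exponent_neg_of_one_div_one_sub_lt h2 hγ⟩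
  have hγpos : 0 < γ := (one_div_pos.mpr (sub_pos.mpr h2)).trans hγ
  have hβ : 0 ≤ γ * log n := mul_nonneg hγpos.le (log_natCast_nonneg n)
  have hself : ⟪y i, y i⟫ = 1 := by rw [real_inner_self_eq_norm_sq, hunit, one_pow]
  calc _ ≤ ((Fintype.card (Fin n) : ℝ) - 1) * exp (γ * log n * (ρ₂ - 1)) :=
        abs_sum_exp_mul_exp_neg_sub_one_le _ i hβ hself fun k hk => (hbound k hk).2
    _ ≤ _ := by
        rw [Fintype.card_fin]
        exact natCast_sub_one_mul_exp_log_le_rpow i.pos γ ρ₂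

theorem stmt19 (ρ₁ ρ₂ γ : ℝ) (h1 : 0 < ρ₁) (h12 : ρ₁ ≤ ρ₂) (h2 : ρ₂ < 1)
    (hγ : 1 / (1 - ρ₂) < γ)
    (n d : ℕ) (y : Fin n → EuclideanSpace ℝ (Fin d)) (i : Fin n)
    (hunit : ∀ k, ‖y k‖ = 1)
    (hbound : ∀ k : Fin n, k ≠ i → ρ₁ ≤ ⟪y i, y k⟫ ∧ ⟪y i, y k⟫ ≤ ρ₂) :
    |(∑ k, Real.exp ((γ * Real.log n) * ⟪y i, y k⟫)) *
        Real.exp (-(γ * Real.log n)) - 1|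
      ≤ (n : ℝ) ^ (γ * ρ₂ + 1 - γ) ∧ γ * ρ₂ + 1 - γ < 0 :=
  stmt19_general ρ₁ ρ₂ γ h2 hγ n d y i hunit hbound
end
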